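/- arXiv:1511.07632 — 3 statements merged into one kernel-verified Lean document; each statement's English description precedes it below -/
import Mathlib

section
/- Let E be an infinite-dimensional Banach space with a normalized, shrinking, 1-unconditional basis (e_n) such that for some p ∈ [1,∞) the dual E* is asymptotic ℓ_p with respect to the biorthogonal sequence (e_n*). Then Sz(E,ε) is finite for every ε > 0 and the Szlenk power type of E equals p, i.e., p(E) = p. -/
open Filter Topology Set
open scoped ENNReal NNReal

noncomputable section

/-- The `ε`-Szlenk derivation of a subset of the dual space, w.r.t. the weak* topology. -/
def szlenkDeriv {X : Type*} [NormedAddCommGroup X] [NormedSpace ℝ X] (ε : ℝ)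
    (K : Set (StrongDual ℝ X)) : Set (StrongDual ℝ X) :=
  {f | f ∈ K ∧ ∀ U : Set (WeakDual ℝ X), IsOpen U →
    StrongDual.toWeakDual f ∈ U →
    ε < Metric.diam {g | g ∈ K ∧ StrongDual.toWeakDual g ∈ U}}

/-- Iterated Szlenk derivations `ι_{ε₁}⋯ι_{εₙ} K` for a list `[ε₁, …, εₙ]`. -/
def szlenkDerivList {X : Type*} [NormedAddCommGroup X] [NormedSpace ℝ X] (l : List ℝ)
    (K : Set (StrongDual ℝ X)) : Set (StrongDual ℝ X) :=
  l.foldr szlenkDeriv K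

/-- The closed unit ball of the dual space. -/
def dualUnitBall (X : Type*) [NormedAddCommGroup X] [NormedSpace ℝ X] :
    Set (StrongDual ℝ X) :=
  Metric.closedBall 0 1

/-- `X` has summable Szlenk index with constant `M`. -/
def HasSummableSzlenkWith (X : Type*) [NormedAddCommGroup X] [NormedSpace ℝ X] (M : ℝ) : Prop :=
  ∀ l : List ℝ, (∀ ε ∈ l, 0 < ε) → (szlenkDerivList l (dualUnitBall X)).Nonempty → l.sum ≤ M

/-- `X` has summable Szlenk index. -/
def HasSummableSzlenk (X : Type*) [NormedAddCommGroup X] [NormedSpace ℝ X] : Prop :=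
  ∃ M > 0, HasSummableSzlenkWith X M

/-- When some finite iterate of the Szlenk derivation kills the dual ball, the ε-Szlenk index
`Sz(X, ε)` is the least `n : ℕ` with `ι_ε^n B_{X*} = ∅`. -/
def szlenkIdx (X : Type*) [NormedAddCommGroup X] [NormedSpace ℝ X] (ε : ℝ) : ℕ :=
  sInf {n : ℕ | (szlenkDeriv ε)^[n] (dualUnitBall X) = ∅}

/-- `Sz(X) ≤ ω`: the ε-Szlenk index is finite for every ε > 0. -/
def SzlenkLeOmega (X : Type*) [NormedAddCommGroup X] [NormedSpace ℝ X] : Prop :=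
  ∀ ε : ℝ, 0 < ε → ∃ n : ℕ, (szlenkDeriv ε)^[n] (dualUnitBall X) = ∅

/-- `Sz(X) = ω`: finite ε-Szlenk indices, unbounded as ε → 0. -/
def SzlenkEqOmega (X : Type*) [NormedAddCommGroup X] [NormedSpace ℝ X] : Prop :=
  SzlenkLeOmega X ∧ ∀ N : ℕ, ∃ ε : ℝ, 0 < ε ∧ ((szlenkDeriv ε)^[N] (dualUnitBall X)).Nonempty

/-- `X` has Szlenk power type `v`: `log Sz(X,ε)/|log ε| → v` as `ε → 0⁺`. -/
def HasSzlenkPowerType (X : Type*) [NormedAddCommGroup X] [NormedSpace ℝ X] (v : ℝ) : Prop :=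
  Tendsto (fun ε : ℝ => Real.log (szlenkIdx X ε) / |Real.log ε|) (𝓝[>] (0:ℝ)) (𝓝 v)

/-- `(Σᵢ |a i|^p)^{1/p}`, the maximum of the `|a i|` when `p = ∞`. -/
def pNorm (p : ℝ≥0∞) {ι : Type*} [Fintype ι] (a : ι → ℝ) : ℝ :=
  if p = ∞ then ((Finset.univ.sup fun i => ‖a i‖₊ : ℝ≥0) : ℝ)
  else (∑ i, |a i| ^ p.toReal) ^ (1 / p.toReal)

/-- A normed space `Z` with coordinate functionals `coord` is `C`-asymptotic `ℓ_p`: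
every block sequence `x₁, …, xₙ` of finitely supported vectors with successive supports
contained in `[n, ∞)` (1-based basis indexing; index `m : ℕ` is the `(m+1)`-st basis vector)
satisfies `C⁻¹ (Σ‖xⱼ‖^p)^{1/p} ≤ ‖Σ xⱼ‖ ≤ C (Σ‖xⱼ‖^p)^{1/p}`. -/
def IsAsymptoticLp (p : ℝ≥0∞) (C : ℝ) {Z : Type*} [NormedAddCommGroup Z]
    (coord : ℕ → Z → ℝ) : Prop :=
  ∀ (n : ℕ) (x : Fin n → Z),
    (∀ j, {m | coord m (x j) ≠ 0}.Finite) →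
    (∀ j m, coord m (x j) ≠ 0 → n ≤ m + 1) →
    (∀ (j k : Fin n), j < k → ∀ m m', coord m (x j) ≠ 0 → coord m' (x k) ≠ 0 → m < m') →
    C⁻¹ * pNorm p (fun j => ‖x j‖) ≤ ‖∑ j, x j‖ ∧
      ‖∑ j, x j‖ ≤ C * pNorm p (fun j => ‖x j‖)

/-- `(e, e')` is a 1-unconditional Schauder basis of `E` with biorthogonal functionals `e'`. -/
structure IsBasis1Unconditional {E : Type*} [NormedAddCommGroup E] [NormedSpace ℝ E]
    (e : ℕ → E) (e' : ℕ → StrongDual ℝ E) : Prop where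
  biorth : ∀ m n, e' m (e n) = if m = n then 1 else 0
  expansion : ∀ x : E, HasSum (fun n => e' n x • e n) x
  unconditional : ∀ (x : E) (σ : ℕ → ℝ), (∀ n, σ n = 1 ∨ σ n = -1) →
    ∃ y : E, HasSum (fun n => (σ n * e' n x) • e n) y ∧ ‖y‖ = ‖x‖

/-- The basis `e` of `E` is shrinking: the norm of the restriction of any functional to the
closed span of the tail of the basis tends to `0`. -/
def ShrinkingBasis {E : Type*} [NormedAddCommGroup E] [NormedSpace ℝ E] (e : ℕ → E) : Prop :=
  ∀ f : StrongDual ℝ E,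
    Tendsto (fun k =>
      ‖f.comp ((Submodule.span ℝ (e '' Set.Ici k)).topologicalClosure).subtypeL‖)
      atTop (𝓝 0)

/-- `T` realizes `Y` as the `E`-direct sum `(⊕ₙ Xₙ)_E` with respect to the basis `e`. -/
structure IsDirectSumE {E : Type*} [NormedAddCommGroup E] [NormedSpace ℝ E] (e : ℕ → E)
    (X : ℕ → Type*) [∀ n, NormedAddCommGroup (X n)] [∀ n, NormedSpace ℝ (X n)]
    {Y : Type*} [NormedAddCommGroup Y] [NormedSpace ℝ Y]
    (T : Y →ₗ[ℝ] ∀ n, X n) : Prop where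
  range_eq : Set.range T = {x | Summable fun n => ‖x n‖ • e n}
  norm_eq : ∀ y, ‖y‖ = ‖∑' n, ‖T y n‖ • e n‖

/-- `T` realizes `Y` as the c₀-sum `(⊕ₙ Xₙ)_{c₀}`. -/
structure IsC0Sum (X : ℕ → Type*) [∀ n, NormedAddCommGroup (X n)] [∀ n, NormedSpace ℝ (X n)]
    {Y : Type*} [NormedAddCommGroup Y] [NormedSpace ℝ Y] (T : Y →ₗ[ℝ] ∀ n, X n) : Prop where
  range_eq : Set.range T = {x | Tendsto (fun n => ‖x n‖) atTop (𝓝 0)}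
  norm_eq : ∀ y, ‖y‖ = ⨆ n, ‖T y n‖

/-- `T` realizes `Y` as the `ℓ_p`-sum `(⊕ₙ Xₙ)_{ℓ_p}`. -/
structure IsLpSum (p : ℝ) (X : ℕ → Type*) [∀ n, NormedAddCommGroup (X n)]
    [∀ n, NormedSpace ℝ (X n)] {Y : Type*} [NormedAddCommGroup Y] [NormedSpace ℝ Y]
    (T : Y →ₗ[ℝ] ∀ n, X n) : Prop where
  range_eq : Set.range T = {x | Summable fun n => ‖x n‖ ^ p}
  norm_eq : ∀ y, ‖y‖ = (∑' n, ‖T y n‖ ^ p) ^ (1/p)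

/-- `ν` is a norm on `X`. -/
structure IsNormOn {X : Type*} [NormedAddCommGroup X] [NormedSpace ℝ X] (ν : X → ℝ) : Prop where
  add_le : ∀ x y, ν (x + y) ≤ ν x + ν y
  smul_eq : ∀ (a : ℝ) (x : X), ν (a • x) = |a| * ν x
  eq_zero_iff : ∀ x : X, ν x = 0 ↔ x = 0

/-- The dual norm on `X*` corresponding to the (equivalent) norm `ν` on `X`. -/
def dualNormOf {X : Type*} [NormedAddCommGroup X] [NormedSpace ℝ X]
    (ν : X → ℝ) (f : StrongDual ℝ X) : ℝ :=
  sSup {r | ∃ x : X, ν x ≤ 1 ∧ r = |f x|}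

/-- `sup_n C_q(X_n) < ∞`: a common constant `c` with `Sz(Xₙ, ε) ≤ c ε^{-q}`. -/
def PowerTypeBddWith (X : ℕ → Type*) [∀ n, NormedAddCommGroup (X n)]
    [∀ n, NormedSpace ℝ (X n)] (q : ℝ) : Prop :=
  ∃ c : ℝ, ∀ n, ∀ ε ∈ Set.Ioo (0:ℝ) 1, (szlenkIdx (X n) ε : ℝ) ≤ c * ε ^ (-q)

/-- The fast growing hierarchy: `g 0 n = n + 1`, `g (k+1) n = (g k)^[n] n`. -/
def fastGrowing : ℕ → ℕ → ℕ
  | 0, n => n + 1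
  | k+1, n => (fastGrowing k)^[n] n

end

/-!
If `f` survives `n` steps of the `ε`-Szlenk derivation of the dual ball, each step can be realised
by a far point that is weak*-close to the previous one on an initial segment of coordinates; by
shrinkingness its difference is essentially carried by a finite block. This gives `g` in the ball
such that `g - f` has `n` successive blocks of norm `≥ ε/4`, while their sum, a coordinate
projection of `g - f`, has norm `≤ 2`; the lower asymptotic `ℓ_p` estimate gives
`n ≤ (8C/ε)^p`. Conversely the functionals `2ε ∑_{i ∈ F} e'_i` with `F ⊆ [n, ∞)` are weak*
limits of `2ε`-separated functionals of the same form with one more term, and the upper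
asymptotic `ℓ_p` estimate keeps all of them in the ball while `C n^{1/p} 2ε ≤ 1`. Hence
`Sz(E, ε) ≍ ε^{-p}`.
-/

open Finset

section CoordProj

variable {E : Type*} [NormedAddCommGroup E] [NormedSpace ℝ E] {e : ℕ → E}
  {e' : ℕ → StrongDual ℝ E}

def coordProj (e : ℕ → E) (e' : ℕ → StrongDual ℝ E) (A : Finset ℕ) : E →L[ℝ] E :=
  ∑ i ∈ A, (e' i).smulRight (e i)

theorem coordProj_apply (A : Finset ℕ) (x : E) :
    coordProj e e' A x = ∑ i ∈ A, e' i x • e i := by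
  simp [coordProj]

@[simp]
theorem coordProj_empty : coordProj e e' ∅ = 0 :=
  sum_empty

theorem comp_coordProj (f : StrongDual ℝ E) (A : Finset ℕ) :
    f.comp (coordProj e e' A) = ∑ i ∈ A, f (e i) • e' i := by
  ext x
  simp [coordProj_apply, mul_comm]

theorem coordProj_union {A B : Finset ℕ} (h : Disjoint A B) :
    coordProj e e' (A ∪ B) = coordProj e e' A + coordProj e e' B :=
  sum_union h

theorem coordProj_biUnion {n : ℕ} (I : Fin n → Finset ℕ)
    (h : Set.PairwiseDisjoint (↑(univ : Finset (Fin n))) I) :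
    coordProj e e' (univ.biUnion I) = ∑ j, coordProj e e' (I j) :=
  sum_biUnion h

theorem coordProj_basis (hb : IsBasis1Unconditional e e') (A : Finset ℕ) (m : ℕ) :
    coordProj e e' A (e m) = if m ∈ A then e m else 0 := by
  simp [coordProj_apply, hb.biorth]

theorem coordProj_comp_coordProj (hb : IsBasis1Unconditional e e') (A B : Finset ℕ) :
    (coordProj e e' A).comp (coordProj e e' B) = coordProj e e' (A ∩ B) := by
  ext x
  simp only [ContinuousLinearMap.comp_apply, coordProj_apply, map_sum, map_smul, hb.biorth,
    ite_smul, one_smul, zero_smul, sum_ite_eq', smul_ite, smul_zero, sum_ite_mem]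
  rw [Finset.inter_comm]

/-- `y` is `x` with the signs of its coordinates outside `A` flipped. -/
theorem exists_norm_eq_coordProj_eq_midpoint (hb : IsBasis1Unconditional e e') (A : Finset ℕ)
    (x : E) : ∃ y, ‖y‖ = ‖x‖ ∧ coordProj e e' A x = (1 / 2 : ℝ) • (x + y) := by
  classical
  obtain ⟨y, hy, hyn⟩ := hb.unconditional x (fun n => if n ∈ A then 1 else -1)
    (fun n => by by_cases hn : n ∈ A <;> simp [hn])
  refine ⟨y, hyn, HasSum.unique ?_ (((hb.expansion x).add hy).const_smul (1 / 2 : ℝ))⟩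
  have h : HasSum (fun n => if n ∈ A then e' n x • e n else 0) (∑ i ∈ A, e' i x • e i) := by
    simpa using hasSum_sum_of_ne_finset_zero (s := A)
      (f := fun n => if n ∈ A then e' n x • e n else 0) fun n hn => if_neg hn
  rw [coordProj_apply]
  convert h using 1
  funext n
  by_cases hn : n ∈ A <;> simp only [hn, if_true, if_false] <;> module

theorem norm_coordProj_le (hb : IsBasis1Unconditional e e') (A : Finset ℕ) :
    ‖coordProj e e' A‖ ≤ 1 := by
  refine ContinuousLinearMap.opNorm_le_bound _ zero_le_one fun x => ?_
  obtain ⟨y, hyn, hP⟩ := exists_norm_eq_coordProj_eq_midpoint hb A x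
  calc ‖coordProj e e' A x‖ ≤ 1 / 2 * (‖x‖ + ‖y‖) := by
        rw [hP, norm_smul, Real.norm_of_nonneg (by norm_num)]; gcongr; exact norm_add_le _ _
    _ = 1 * ‖x‖ := by rw [hyn]; ring

theorem norm_one_sub_coordProj_le (hb : IsBasis1Unconditional e e') (A : Finset ℕ) :
    ‖1 - coordProj e e' A‖ ≤ 1 := by
  refine ContinuousLinearMap.opNorm_le_bound _ zero_le_one fun x => ?_
  obtain ⟨y, hyn, hP⟩ := exists_norm_eq_coordProj_eq_midpoint hb A x
  have hsub : (1 - coordProj e e' A) x = (1 / 2 : ℝ) • (x - y) := by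
    change x - coordProj e e' A x = _
    rw [hP]; module
  calc ‖(1 - coordProj e e' A) x‖ ≤ 1 / 2 * (‖x‖ + ‖y‖) := by
        rw [hsub, norm_smul, Real.norm_of_nonneg (by norm_num)]; gcongr; exact norm_sub_le _ _
    _ = 1 * ‖x‖ := by rw [hyn]; ring

theorem norm_coord_eq_one (hb : IsBasis1Unconditional e e') (hnorm : ∀ n, ‖e n‖ = 1) (i : ℕ) :
    ‖e' i‖ = 1 := by
  refine le_antisymm (ContinuousLinearMap.opNorm_le_bound _ zero_le_one fun x => ?_) ?_
  · have h := (coordProj e e' {i}).le_of_opNorm_le (norm_coordProj_le hb {i}) x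
    simpa [coordProj_apply, norm_smul, hnorm i] using h
  · simpa [hb.biorth, hnorm i] using (e' i).le_opNorm (e i)

theorem norm_comp_coordProj_le_sum (hb : IsBasis1Unconditional e e') (hnorm : ∀ n, ‖e n‖ = 1)
    (f : StrongDual ℝ E) (A : Finset ℕ) :
    ‖f.comp (coordProj e e' A)‖ ≤ ∑ i ∈ A, |f (e i)| := by
  rw [comp_coordProj]
  refine (norm_sum_le _ _).trans_eq (sum_congr rfl fun i _ => ?_)
  rw [norm_smul, norm_coord_eq_one hb hnorm, mul_one, Real.norm_eq_abs]

theorem norm_comp_coordProj_mono (hb : IsBasis1Unconditional e e') (f : StrongDual ℝ E)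
    {A B : Finset ℕ} (hAB : A ⊆ B) :
    ‖f.comp (coordProj e e' A)‖ ≤ ‖f.comp (coordProj e e' B)‖ := by
  rw [← Finset.inter_eq_right.2 hAB, ← coordProj_comp_coordProj hb,
    ← ContinuousLinearMap.comp_assoc]
  exact (ContinuousLinearMap.opNorm_comp_le _ _).trans
    (mul_le_of_le_one_right (norm_nonneg _) (norm_coordProj_le hb A))

end CoordProj

section Tail

variable {E : Type*} [NormedAddCommGroup E] [NormedSpace ℝ E] {e : ℕ → E}
  {e' : ℕ → StrongDual ℝ E}

theorem one_sub_coordProj_range_mem (hb : IsBasis1Unconditional e e') (K : ℕ) (x : E) :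
    (1 - coordProj e e' (range K)) x ∈ (Submodule.span ℝ (e '' Set.Ici K)).topologicalClosure := by
  set z := (1 - coordProj e e' (range K)) x
  have hcoord : ∀ n < K, e' n z = 0 := fun n hn => by
    simp [z, coordProj_apply, map_sum, hb.biorth, mem_range.2 hn]
  refine mem_closure_of_tendsto (hb.expansion z) (Eventually.of_forall fun s => ?_)
  refine Submodule.sum_mem _ fun n _ => ?_
  rcases lt_or_ge n K with hn | hn
  · simp [hcoord n hn]
  · exact Submodule.smul_mem _ _ (Submodule.subset_span ⟨n, hn, rfl⟩)

theorem norm_comp_one_sub_coordProj_le (hb : IsBasis1Unconditional e e') (f : StrongDual ℝ E)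
    (K : ℕ) : ‖f.comp (1 - coordProj e e' (range K))‖ ≤
      ‖f.comp (Submodule.span ℝ (e '' Set.Ici K)).topologicalClosure.subtypeL‖ := by
  refine ContinuousLinearMap.opNorm_le_bound _ (ContinuousLinearMap.opNorm_nonneg _) fun x => ?_
  set g := f.comp (Submodule.span ℝ (e '' Set.Ici K)).topologicalClosure.subtypeL
  have hz := one_sub_coordProj_range_mem hb K x
  calc ‖f ((1 - coordProj e e' (range K)) x)‖ = ‖g ⟨_, hz⟩‖ := rfl
    _ ≤ ‖g‖ * ‖(1 - coordProj e e' (range K)) x‖ := g.le_opNorm _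
    _ ≤ ‖g‖ * ‖x‖ := by
        gcongr
        simpa using (1 - coordProj e e' (range K)).le_of_opNorm_le
          (norm_one_sub_coordProj_le hb _) x

theorem tendsto_norm_comp_one_sub_coordProj (hb : IsBasis1Unconditional e e')
    (hshr : ShrinkingBasis e) (f : StrongDual ℝ E) :
    Tendsto (fun K => ‖f.comp (1 - coordProj e e' (range K))‖) atTop (𝓝 0) :=
  squeeze_zero (fun _ => norm_nonneg _) (norm_comp_one_sub_coordProj_le hb f) (hshr f)

theorem norm_comp_coordProj_le_of_forall_le (hb : IsBasis1Unconditional e e')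
    (f : StrongDual ℝ E) {A : Finset ℕ} {K : ℕ} (hA : ∀ i ∈ A, K ≤ i) :
    ‖f.comp (coordProj e e' A)‖ ≤ ‖f.comp (1 - coordProj e e' (range K))‖ := by
  have hdisj : range K ∩ A = ∅ :=
    disjoint_iff_inter_eq_empty.1 (disjoint_right.2 fun i hi => by simpa using hA i hi)
  have hP : coordProj e e' A = (1 - coordProj e e' (range K)).comp (coordProj e e' A) := by
    rw [ContinuousLinearMap.sub_comp, coordProj_comp_coordProj hb, hdisj, coordProj_empty,
      sub_zero]
    exact (ContinuousLinearMap.id_comp _).symm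
  rw [hP, ← ContinuousLinearMap.comp_assoc]
  exact (ContinuousLinearMap.opNorm_comp_le _ _).trans
    (mul_le_of_le_one_right (norm_nonneg _) (norm_coordProj_le hb A))

theorem tendsto_toWeakDual_coord (hb : IsBasis1Unconditional e e') (hnorm : ∀ n, ‖e n‖ = 1) :
    Tendsto (fun m => StrongDual.toWeakDual (e' m)) atTop (𝓝 0) := by
  refine tendsto_iff_forall_eval_tendsto_topDualPairing.2 fun x => ?_
  have h := (hb.expansion x).summable.tendsto_atTop_zero.norm
  simp only [norm_smul, hnorm, mul_one, norm_zero] at h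
  exact tendsto_zero_iff_norm_tendsto_zero.2 h

end Tail

section Szlenk

variable {X : Type*} [NormedAddCommGroup X] [NormedSpace ℝ X] {ε : ℝ}
  {K : Set (StrongDual ℝ X)} {f : StrongDual ℝ X}

theorem iterate_szlenkDeriv_subset (ε : ℝ) (K : Set (StrongDual ℝ X)) (n : ℕ) :
    (szlenkDeriv ε)^[n] K ⊆ K := by
  induction n with
  | zero => exact subset_rfl
  | succ n ih =>
    rw [Function.iterate_succ_apply']
    exact fun _ hf => ih hf.1

theorem iterate_szlenkDeriv_antitone (ε : ℝ) (K : Set (StrongDual ℝ X)) :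
    Antitone fun n => (szlenkDeriv ε)^[n] K := by
  intro m n hmn
  obtain ⟨k, rfl⟩ := Nat.exists_eq_add_of_le' hmn
  simp only [Function.iterate_add_apply]
  exact iterate_szlenkDeriv_subset ε _ k

theorem isBounded_iterate_szlenkDeriv_dualUnitBall (ε : ℝ) (n : ℕ) :
    Bornology.IsBounded ((szlenkDeriv ε)^[n] (dualUnitBall X)) :=
  Metric.isBounded_closedBall.subset (iterate_szlenkDeriv_subset ε _ n)

theorem exists_mem_norm_sub_gt_of_mem_szlenkDeriv (hf : f ∈ szlenkDeriv ε K)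
    {U : Set (WeakDual ℝ X)} (hU : U ∈ 𝓝 (StrongDual.toWeakDual f)) :
    ∃ g ∈ K, StrongDual.toWeakDual g ∈ U ∧ ε / 2 < ‖g - f‖ := by
  obtain ⟨V, hVU, hV, hfV⟩ := mem_nhds_iff.1 hU
  by_contra! hnear
  have hclose : ∀ g ∈ {g | g ∈ K ∧ StrongDual.toWeakDual g ∈ V}, ‖g - f‖ ≤ ε / 2 :=
    fun g hg => hnear g hg.1 (hVU hg.2)
  have hε : 0 ≤ ε := by linarith [norm_nonneg (f - f), hclose f ⟨hf.1, hfV⟩]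
  refine (hf.2 V hV hfV).not_ge (Metric.diam_le_of_forall_dist_le hε fun g hg g' hg' => ?_)
  calc dist g g' ≤ ‖g - f‖ + ‖g' - f‖ := by
        rw [dist_eq_norm, ← sub_sub_sub_cancel_right g g' f]; exact norm_sub_le _ _
    _ ≤ ε := by linarith [hclose g hg, hclose g' hg']

theorem mem_szlenkDeriv_of_tendsto (hK : Bornology.IsBounded K) (hf : f ∈ K)
    {u : ℕ → StrongDual ℝ X} (hu : ∀ᶠ m in atTop, u m ∈ K)
    (hlim : Tendsto (fun m => StrongDual.toWeakDual (u m)) atTop (𝓝 (StrongDual.toWeakDual f)))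
    (hsep : ∀ m m', m < m' → ε < ‖u m - u m'‖) : f ∈ szlenkDeriv ε K := by
  refine ⟨hf, fun U hU hfU => ?_⟩
  have hev := hu.and (hlim.eventually_mem (hU.mem_nhds hfU))
  obtain ⟨m, hm⟩ := hev.exists
  obtain ⟨m', hm', hmm'⟩ := (hev.and (eventually_gt_atTop m)).exists
  calc ε < ‖u m - u m'‖ := hsep m m' hmm'
    _ = dist (u m) (u m') := (dist_eq_norm _ _).symm
    _ ≤ _ := Metric.dist_le_diam_of_mem (hK.subset fun _ hg => hg.1) hm hm'

theorem szlenkIdx_le_of_eq_empty {n : ℕ} (h : (szlenkDeriv ε)^[n] (dualUnitBall X) = ∅) :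
    szlenkIdx X ε ≤ n :=
  Nat.sInf_le h

theorem lt_szlenkIdx_of_nonempty (hX : ∃ m, (szlenkDeriv ε)^[m] (dualUnitBall X) = ∅) {n : ℕ}
    (h : ((szlenkDeriv ε)^[n] (dualUnitBall X)).Nonempty) : n < szlenkIdx X ε := by
  by_contra! hle
  have hempty : (szlenkDeriv ε)^[szlenkIdx X ε] (dualUnitBall X) = ∅ := Nat.sInf_mem hX
  exact h.ne_empty (Set.subset_eq_empty (iterate_szlenkDeriv_antitone ε _ hle) hempty)

end Szlenk

section PNorm

variable {p : ℝ}

theorem pNorm_ofReal_const (hp : 0 < p) (n : ℕ) {a : ℝ} (ha : 0 ≤ a) :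
    pNorm (ENNReal.ofReal p) (fun _ : Fin n => a) = (n : ℝ) ^ (1 / p) * a := by
  rw [pNorm, if_neg ENNReal.ofReal_ne_top, ENNReal.toReal_ofReal hp.le, sum_const, card_univ,
    Fintype.card_fin, nsmul_eq_mul, abs_of_nonneg ha, Real.mul_rpow (Nat.cast_nonneg n)
    (Real.rpow_nonneg ha p), ← Real.rpow_mul ha, mul_one_div_cancel hp.ne', Real.rpow_one]

theorem pNorm_ofReal_mono (hp : 0 < p) {ι : Type*} [Fintype ι] {a b : ι → ℝ}
    (h0 : ∀ i, 0 ≤ a i) (h : ∀ i, a i ≤ b i) :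
    pNorm (ENNReal.ofReal p) a ≤ pNorm (ENNReal.ofReal p) b := by
  simp only [pNorm, if_neg ENNReal.ofReal_ne_top, ENNReal.toReal_ofReal hp.le]
  refine Real.rpow_le_rpow (by positivity) (sum_le_sum fun i _ => ?_) (by positivity)
  rw [abs_of_nonneg (h0 i), abs_of_nonneg ((h0 i).trans (h i))]
  exact Real.rpow_le_rpow (h0 i) (h i) hp.le

end PNorm

section LowerEstimate

variable {E : Type*} [NormedAddCommGroup E] [NormedSpace ℝ E] {e : ℕ → E}
  {e' : ℕ → StrongDual ℝ E} {p C ε : ℝ}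

theorem one_le_norm_coord_sub_coord (hb : IsBasis1Unconditional e e') (hnorm : ∀ n, ‖e n‖ = 1)
    {m m' : ℕ} (h : m ≠ m') : 1 ≤ ‖e' m - e' m'‖ := by
  simpa [hb.biorth, h.symm, hnorm m] using (e' m - e' m').le_opNorm (e m)

theorem norm_sum_smul_coord_le (hb : IsBasis1Unconditional e e') (hnorm : ∀ n, ‖e n‖ = 1)
    (hp : 0 < p) (hasy : IsAsymptoticLp (ENNReal.ofReal p) C fun n (f : StrongDual ℝ E) => f (e n))
    {a : ℝ} (ha : 0 ≤ a) {F : Finset ℕ} (hF : ∀ i ∈ F, #F ≤ i + 1) :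
    ‖∑ i ∈ F, a • e' i‖ ≤ C * ((#F : ℝ) ^ (1 / p) * a) := by
  set ι := F.orderIsoOfFin rfl
  set x : Fin #F → StrongDual ℝ E := fun j => a • e' (ι j)
  have hsupp : ∀ j m, x j (e m) ≠ 0 → m = ι j := fun j m hm => by
    by_contra h
    simp [x, hb.biorth, Ne.symm h] at hm
  have hsum : ∑ j, x j = ∑ i ∈ F, a • e' i := by
    rw [← sum_coe_sort F]
    exact Fintype.sum_equiv ι.toEquiv _ _ fun _ => rfl
  have hnormx : (fun j => ‖x j‖) = fun _ => a := by
    funext j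
    simp [x, norm_smul, norm_coord_eq_one hb hnorm, abs_of_nonneg ha]
  have hest := (hasy #F x
    (fun j => (Set.finite_singleton (ι j : ℕ)).subset fun m hm => hsupp j m hm)
    (fun j m hm => hsupp j m hm ▸ hF _ (ι j).2)
    (fun j k hjk m m' hm hm' => by rw [hsupp j m hm, hsupp k m' hm']; exact ι.strictMono hjk)).2
  rwa [hsum, hnormx, pNorm_ofReal_const hp _ ha] at hest

/-- Adding `2ε e'_m` with `m → ∞` is a weak*-null, `2ε`-separated perturbation that stays in the
previous derivative. -/
theorem sum_smul_coord_mem_iterate_szlenkDeriv (hb : IsBasis1Unconditional e e')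
    (hnorm : ∀ n, ‖e n‖ = 1) (hp : 0 < p) (hC : 0 ≤ C)
    (hasy : IsAsymptoticLp (ENNReal.ofReal p) C fun n (f : StrongDual ℝ E) => f (e n))
    (hε : 0 < ε) {n : ℕ} (hn : C * ((n : ℝ) ^ (1 / p) * (2 * ε)) ≤ 1) (j : ℕ) :
    ∀ F : Finset ℕ, (∀ i ∈ F, n ≤ i) → #F + j ≤ n →
      ∑ i ∈ F, (2 * ε) • e' i ∈ (szlenkDeriv ε)^[j] (dualUnitBall E) := by
  induction j with
  | zero =>
    intro F hF hcard
    rw [Function.iterate_zero_apply, dualUnitBall, mem_closedBall_zero_iff]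
    calc ‖∑ i ∈ F, (2 * ε) • e' i‖ ≤ C * ((#F : ℝ) ^ (1 / p) * (2 * ε)) :=
          norm_sum_smul_coord_le hb hnorm hp hasy (by positivity) fun i hi => by
            linarith [hF i hi]
      _ ≤ C * ((n : ℝ) ^ (1 / p) * (2 * ε)) := by gcongr; exact_mod_cast (by omega : #F ≤ n)
      _ ≤ 1 := hn
  | succ j ih =>
    intro F hF hcard
    rw [Function.iterate_succ_apply']
    refine mem_szlenkDeriv_of_tendsto (isBounded_iterate_szlenkDeriv_dualUnitBall ε j)
      (ih F hF (by omega)) (u := fun m => (2 * ε) • e' m + ∑ i ∈ F, (2 * ε) • e' i) ?_ ?_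
      fun m m' hmm' => ?_
    · filter_upwards [eventually_ge_atTop n, eventually_gt_atTop (F.sup id)] with m hmn hmF
      have hm : m ∉ F := fun hm => (le_sup (f := id) hm).not_gt hmF
      rw [show _ = ∑ i ∈ insert m F, (2 * ε) • e' i from (sum_insert hm).symm]
      refine ih _ (fun i hi => ?_) ?_
      · rcases mem_insert.1 hi with rfl | hi
        exacts [hmn, hF i hi]
      · rw [card_insert_of_notMem hm]; omega
    · simpa using ((tendsto_toWeakDual_coord hb hnorm).const_smul (2 * ε)).add_const
        (StrongDual.toWeakDual (∑ i ∈ F, (2 * ε) • e' i))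
    · rw [add_sub_add_right_eq_sub, ← smul_sub (2 * ε) (e' m) (e' m'), norm_smul,
        Real.norm_of_nonneg (by positivity)]
      nlinarith [one_le_norm_coord_sub_coord hb hnorm hmm'.ne]

theorem iterate_szlenkDeriv_dualUnitBall_nonempty (hb : IsBasis1Unconditional e e')
    (hnorm : ∀ n, ‖e n‖ = 1) (hp : 0 < p) (hC : 0 ≤ C)
    (hasy : IsAsymptoticLp (ENNReal.ofReal p) C fun n (f : StrongDual ℝ E) => f (e n))
    (hε : 0 < ε) {n : ℕ} (hn : C * ((n : ℝ) ^ (1 / p) * (2 * ε)) ≤ 1) :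
    ((szlenkDeriv ε)^[n] (dualUnitBall E)).Nonempty :=
  ⟨_, sum_smul_coord_mem_iterate_szlenkDeriv hb hnorm hp hC hasy hε hn n ∅ (by simp) (by simp)⟩

end LowerEstimate

def IsBlockSeq {n : ℕ} (k : ℕ) (I : Fin n → Finset ℕ) : Prop :=
  (∀ j, ∀ m ∈ I j, k ≤ m) ∧ ∀ j j', j < j' → ∀ m ∈ I j, ∀ m' ∈ I j', m < m'

theorem IsBlockSeq.cons {n k N : ℕ} {I₀ : Finset ℕ} {I : Fin n → Finset ℕ} (hkN : k ≤ N)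
    (h₀ : ∀ m ∈ I₀, k ≤ m ∧ m < N) (hI : IsBlockSeq N I) :
    IsBlockSeq k (Fin.cons I₀ I : Fin (n + 1) → Finset ℕ) := by
  refine ⟨Fin.cases (fun m hm => (h₀ m hm).1) fun j m hm => hkN.trans (hI.1 j m hm), ?_⟩
  refine Fin.cases (Fin.cases (fun h => absurd h (lt_irrefl _)) fun j' _ m hm m' hm' => ?_)
    fun j => Fin.cases (fun h => absurd h (Fin.not_lt_zero _)) fun j' h => ?_
  · exact (h₀ m hm).2.trans_le (hI.1 j' m' hm')
  · exact hI.2 j j' (Fin.succ_lt_succ_iff.1 h)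

theorem IsBlockSeq.pairwiseDisjoint {n k : ℕ} {I : Fin n → Finset ℕ} (hI : IsBlockSeq k I) :
    Set.PairwiseDisjoint (↑(univ : Finset (Fin n))) I := by
  intro j _ j' _ hjj'
  rcases hjj'.lt_or_gt with h | h
  · exact disjoint_left.2 fun m hm hm' => (hI.2 j j' h m hm m hm').false
  · exact disjoint_left.2 fun m hm hm' => (hI.2 j' j h m hm' m hm).false

section UpperEstimate

variable {E : Type*} [NormedAddCommGroup E] [NormedSpace ℝ E] {e : ℕ → E}
  {e' : ℕ → StrongDual ℝ E} {ε : ℝ} {K : Set (StrongDual ℝ E)} {f : StrongDual ℝ E}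

/-- `f₁` is weak*-close to `f` on the first `k` coordinates and, by shrinkingness, `f₁ - f` is
small beyond some `N`; so most of `‖f₁ - f‖ > ε/2` sits on the block `[k, N)`. -/
theorem exists_block_of_mem_szlenkDeriv (hb : IsBasis1Unconditional e e')
    (hnorm : ∀ n, ‖e n‖ = 1) (hshr : ShrinkingBasis e) (hf : f ∈ szlenkDeriv ε K) (k : ℕ)
    {η : ℝ} (hη : 0 < η) :
    ∃ f₁ ∈ K, ∃ N ≥ k, ε / 2 - 2 * η < ‖(f₁ - f).comp (coordProj e e' (Ico k N))‖ ∧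
      ‖(f₁ - f).comp (coordProj e e' (range k))‖ ≤ η ∧
      ‖(f₁ - f).comp (1 - coordProj e e' (range N))‖ ≤ η := by
  have hU : ∀ᶠ h in 𝓝 (StrongDual.toWeakDual f), ∀ i ∈ range k,
      dist (h (e i)) (f (e i)) < η / (k + 1) :=
    (eventually_all_finset _).2 fun i _ =>
      (WeakDual.eval_continuous (e i)).continuousAt.eventually
        (Metric.ball_mem_nhds _ (by positivity))
  obtain ⟨f₁, hf₁, hf₁U, hfar⟩ := exists_mem_norm_sub_gt_of_mem_szlenkDeriv hf hU
  set d := f₁ - f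
  have hinit : ‖d.comp (coordProj e e' (range k))‖ ≤ η := by
    calc ‖d.comp (coordProj e e' (range k))‖ ≤ ∑ i ∈ range k, |d (e i)| :=
          norm_comp_coordProj_le_sum hb hnorm d _
      _ ≤ ∑ _i ∈ range k, η / (k + 1) := sum_le_sum fun i hi => (hf₁U i hi).le
      _ ≤ η := by
          rw [sum_const, card_range, nsmul_eq_mul, mul_div_assoc']
          exact div_le_of_le_mul₀ (by positivity) hη.le (by linarith)
  obtain ⟨N, htail, hkN⟩ := (((tendsto_norm_comp_one_sub_coordProj hb hshr d).eventually_lt_const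
    hη).and (eventually_ge_atTop k)).exists
  refine ⟨f₁, hf₁, N, hkN, ?_, hinit, htail.le⟩
  have hdecomp : d = d.comp (coordProj e e' (range k)) + d.comp (coordProj e e' (Ico k N)) +
      d.comp (1 - coordProj e e' (range N)) := by
    have hdisj : Disjoint (range k) (Ico k N) := by
      rw [range_eq_Ico]; exact Ico_disjoint_Ico_consecutive 0 k N
    have hunion : range k ∪ Ico k N = range N := by
      rw [range_eq_Ico, range_eq_Ico, Finset.Ico_union_Ico_eq_Ico k.zero_le hkN]
    rw [← ContinuousLinearMap.comp_add, ← ContinuousLinearMap.comp_add, ← coordProj_union hdisj,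
      hunion, add_sub_cancel]
    rfl
  have hsum := norm_add₃_le (a := d.comp (coordProj e e' (range k)))
    (b := d.comp (coordProj e e' (Ico k N))) (c := d.comp (1 - coordProj e e' (range N)))
  rw [← hdecomp] at hsum
  linarith

/-- The last conjunct is what keeps the later perturbations from spoiling the earlier blocks. -/
theorem exists_blocks_of_mem_iterate_szlenkDeriv (hb : IsBasis1Unconditional e e')
    (hnorm : ∀ n, ‖e n‖ = 1) (hshr : ShrinkingBasis e) (n : ℕ) :
    ∀ f ∈ (szlenkDeriv ε)^[n] K, ∀ (k : ℕ) {η : ℝ}, 0 < η → ∃ g ∈ K,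
      ∃ I : Fin n → Finset ℕ, IsBlockSeq k I ∧
        (∀ j, ε / 2 - η ≤ ‖(g - f).comp (coordProj e e' (I j))‖) ∧
        ‖(g - f).comp (coordProj e e' (range k))‖ ≤ η := by
  induction n with
  | zero => exact fun f hf k η hη => ⟨f, hf, Fin.elim0, ⟨fun j => j.elim0, fun j => j.elim0⟩,
      fun j => j.elim0, by simpa using hη.le⟩
  | succ n ih =>
    intro f hf k η hη
    rw [Function.iterate_succ_apply'] at hf
    obtain ⟨f₁, hf₁, N, hkN, hblock, hinit, htail⟩ :=
      exists_block_of_mem_szlenkDeriv hb hnorm hshr hf k (η := η / 3) (by positivity)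
    obtain ⟨g, hg, I, hI, hIj, hgN⟩ := ih f₁ hf₁ N (η := η / 3) (by positivity)
    have hsplit : ∀ A, (g - f).comp (coordProj e e' A) =
        (g - f₁).comp (coordProj e e' A) + (f₁ - f).comp (coordProj e e' A) := fun A => by
      rw [← ContinuousLinearMap.add_comp, sub_add_sub_cancel]
    have hsmall : ∀ A ⊆ range N, ‖(g - f₁).comp (coordProj e e' A)‖ ≤ η / 3 :=
      fun A hA => (norm_comp_coordProj_mono hb _ hA).trans hgN
    have hfirst : ε / 2 - η ≤ ‖(g - f).comp (coordProj e e' (Ico k N))‖ := by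
      have h := hsmall (Ico k N) fun m hm => mem_range.2 (mem_Ico.1 hm).2
      rw [hsplit]
      linarith [norm_le_add_norm_add' ((g - f₁).comp (coordProj e e' (Ico k N)))
        ((f₁ - f).comp (coordProj e e' (Ico k N)))]
    have hrest : ∀ j, ε / 2 - η ≤ ‖(g - f).comp (coordProj e e' (I j))‖ := fun j => by
      have h := (norm_comp_coordProj_le_of_forall_le hb (f₁ - f) (hI.1 j)).trans htail
      rw [hsplit]
      linarith [hIj j, norm_le_add_norm_add ((g - f₁).comp (coordProj e e' (I j)))
        ((f₁ - f).comp (coordProj e e' (I j)))]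
    refine ⟨g, hg, Fin.cons (Ico k N) I, hI.cons hkN fun m hm => mem_Ico.1 hm,
      Fin.cases hfirst hrest, ?_⟩
    rw [hsplit]
    linarith [hsmall (range k) (range_subset_range.2 hkN), norm_add_le
      ((g - f₁).comp (coordProj e e' (range k))) ((f₁ - f).comp (coordProj e e' (range k)))]

end UpperEstimate

section Bounds

variable {E : Type*} [NormedAddCommGroup E] [NormedSpace ℝ E] {e : ℕ → E}
  {e' : ℕ → StrongDual ℝ E} {p C ε : ℝ}

/-- A point surviving `n` derivations yields `n` successive blocks of `g - f` of norm `≥ ε/4`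
whose sum is a coordinate projection of `g - f`, of norm `≤ 2`; the lower `ℓ_p` estimate
then bounds `n`. -/
theorem natCast_le_of_iterate_szlenkDeriv_nonempty (hb : IsBasis1Unconditional e e')
    (hnorm : ∀ n, ‖e n‖ = 1) (hshr : ShrinkingBasis e) (hp : 0 < p) (hC : 0 < C)
    (hasy : IsAsymptoticLp (ENNReal.ofReal p) C fun n (f : StrongDual ℝ E) => f (e n))
    (hε : 0 < ε) {n : ℕ} (hne : ((szlenkDeriv ε)^[n] (dualUnitBall E)).Nonempty) :
    (n : ℝ) ≤ (8 * C / ε) ^ p := by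
  obtain ⟨f, hf⟩ := hne
  obtain ⟨g, hg, I, hI, hIj, -⟩ :=
    exists_blocks_of_mem_iterate_szlenkDeriv hb hnorm hshr n f hf n (η := ε / 4) (by positivity)
  set x : Fin n → StrongDual ℝ E := fun j => (g - f).comp (coordProj e e' (I j))
  have hsupp : ∀ j m, x j (e m) ≠ 0 → m ∈ I j := fun j m hm => by
    by_contra h
    simp [x, coordProj_basis hb, h] at hm
  have hest := (hasy n x (fun j => (I j).finite_toSet.subset fun m hm => hsupp j m hm)
    (fun j m hm => by linarith [hI.1 j m (hsupp j m hm)])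
    (fun j j' h m m' hm hm' => hI.2 j j' h m (hsupp j m hm) m' (hsupp j' m' hm'))).1
  have hlow : (n : ℝ) ^ (1 / p) * (ε / 4) ≤ pNorm (ENNReal.ofReal p) fun j => ‖x j‖ := by
    rw [← pNorm_ofReal_const hp n (by positivity)]
    exact pNorm_ofReal_mono hp (fun _ => by positivity) fun j => by linarith [hIj j]
  have hsum : ‖∑ j, x j‖ ≤ 2 := by
    have hf1 : ‖f‖ ≤ 1 := mem_closedBall_zero_iff.1 (iterate_szlenkDeriv_subset ε _ n hf)
    have hg1 : ‖g‖ ≤ 1 := mem_closedBall_zero_iff.1 hg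
    calc ‖∑ j, x j‖ = ‖(g - f).comp (coordProj e e' (univ.biUnion I))‖ := by
          rw [coordProj_biUnion I hI.pairwiseDisjoint, ContinuousLinearMap.comp_finsetSum]
      _ ≤ ‖g - f‖ * 1 := (ContinuousLinearMap.opNorm_comp_le _ _).trans
          (by gcongr; exact norm_coordProj_le hb _)
      _ ≤ 2 := by linarith [norm_sub_le g f]
  have hroot : (n : ℝ) ^ p⁻¹ ≤ 8 * C / ε := by
    rw [inv_mul_le_iff₀ hC] at hest
    rw [le_div_iff₀ hε]
    calc (n : ℝ) ^ p⁻¹ * ε = 4 * ((n : ℝ) ^ (1 / p) * (ε / 4)) := by rw [one_div]; ring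
      _ ≤ 4 * (C * 2) := by gcongr 4 * ?_; exact hlow.trans (hest.trans (by gcongr))
      _ = 8 * C := by ring
  exact (Real.rpow_inv_le_iff_of_pos (Nat.cast_nonneg n) (by positivity) hp).1 hroot

theorem iterate_szlenkDeriv_dualUnitBall_eq_empty (hb : IsBasis1Unconditional e e')
    (hnorm : ∀ n, ‖e n‖ = 1) (hshr : ShrinkingBasis e) (hp : 0 < p) (hC : 0 < C)
    (hasy : IsAsymptoticLp (ENNReal.ofReal p) C fun n (f : StrongDual ℝ E) => f (e n))
    (hε : 0 < ε) : (szlenkDeriv ε)^[⌊(8 * C / ε) ^ p⌋₊ + 1] (dualUnitBall E) = ∅ := by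
  by_contra h
  have hle := natCast_le_of_iterate_szlenkDeriv_nonempty hb hnorm hshr hp hC hasy hε
    (Set.nonempty_iff_ne_empty.2 h)
  exact (Nat.le_floor hle).not_gt (Nat.lt_succ_self _)

theorem szlenkIdx_le_rpow (hb : IsBasis1Unconditional e e') (hnorm : ∀ n, ‖e n‖ = 1)
    (hshr : ShrinkingBasis e) (hp : 1 ≤ p) (hC : 1 ≤ C)
    (hasy : IsAsymptoticLp (ENNReal.ofReal p) C fun n (f : StrongDual ℝ E) => f (e n))
    (hε : 0 < ε) (hε1 : ε ≤ 1) : (szlenkIdx E ε : ℝ) ≤ (16 * C / ε) ^ p := by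
  have hidx := szlenkIdx_le_of_eq_empty
    (iterate_szlenkDeriv_dualUnitBall_eq_empty hb hnorm hshr (by linarith) (by linarith) hasy hε)
  have hone : 1 ≤ (8 * C / ε) ^ p :=
    Real.one_le_rpow ((one_le_div hε).2 (by linarith)) (by linarith)
  calc (szlenkIdx E ε : ℝ) ≤ ⌊(8 * C / ε) ^ p⌋₊ + 1 := by exact_mod_cast hidx
    _ ≤ (8 * C / ε) ^ p + (8 * C / ε) ^ p := by gcongr; exact Nat.floor_le (by positivity)
    _ = 2 ^ (1 : ℝ) * (8 * C / ε) ^ p := by rw [Real.rpow_one]; ring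
    _ ≤ 2 ^ p * (8 * C / ε) ^ p := by gcongr; exact one_le_two
    _ = (16 * C / ε) ^ p := by
        rw [← Real.mul_rpow zero_le_two (by positivity)]; ring_nf

theorem rpow_lt_szlenkIdx (hb : IsBasis1Unconditional e e') (hnorm : ∀ n, ‖e n‖ = 1)
    (hshr : ShrinkingBasis e) (hp : 0 < p) (hC : 0 < C)
    (hasy : IsAsymptoticLp (ENNReal.ofReal p) C fun n (f : StrongDual ℝ E) => f (e n))
    (hε : 0 < ε) : ((2 * C)⁻¹ / ε) ^ p < szlenkIdx E ε := by
  set y := (2 * C)⁻¹ / ε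
  have hroot : ((⌊y ^ p⌋₊ : ℕ) : ℝ) ^ p⁻¹ ≤ y :=
    (Real.rpow_inv_le_iff_of_pos (Nat.cast_nonneg _) (by positivity) hp).2
      (Nat.floor_le (by positivity))
  have hne := iterate_szlenkDeriv_dualUnitBall_nonempty hb hnorm hp hC.le hasy hε
    (n := ⌊y ^ p⌋₊) <| by
      calc C * ((⌊y ^ p⌋₊ : ℝ) ^ (1 / p) * (2 * ε)) ≤ C * (y * (2 * ε)) := by
            rw [one_div]; gcongr
        _ = 1 := by simp only [y]; field_simp
  have hlt := lt_szlenkIdx_of_nonempty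
    ⟨_, iterate_szlenkDeriv_dualUnitBall_eq_empty hb hnorm hshr hp hC hasy hε⟩ hne
  calc y ^ p < ⌊y ^ p⌋₊ + 1 := Nat.lt_floor_add_one _
    _ ≤ szlenkIdx E ε := by exact_mod_cast hlt

end Bounds

theorem tendsto_log_div_abs_log_of_rpow_le_of_le_rpow {F : ℝ → ℝ} {p a b : ℝ} (ha : 0 < a)
    (hb : 0 < b) (hlow : ∀ᶠ ε in 𝓝[>] 0, (a / ε) ^ p ≤ F ε)
    (hup : ∀ᶠ ε in 𝓝[>] 0, F ε ≤ (b / ε) ^ p) :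
    Tendsto (fun ε => Real.log (F ε) / |Real.log ε|) (𝓝[>] 0) (𝓝 p) := by
  have habs : Tendsto (fun ε => |Real.log ε|) (𝓝[>] 0) atTop :=
    tendsto_abs_atBot_atTop.comp Real.tendsto_log_nhdsGT_zero
  have hlim : ∀ c, Tendsto (fun ε => p * Real.log c / |Real.log ε| + p) (𝓝[>] 0) (𝓝 p) :=
    fun c => by simpa using (tendsto_const_nhds.div_atTop habs).add_const p
  have hlog : ∀ {c ε : ℝ}, 0 < c → ε ∈ Ioo (0 : ℝ) 1 →
      Real.log ((c / ε) ^ p) / |Real.log ε| = p * Real.log c / |Real.log ε| + p := by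
    intro c ε hc ⟨hε0, hε1⟩
    have hneg := Real.log_neg hε0 hε1
    have hne := hneg.ne
    rw [Real.log_rpow (by positivity), Real.log_div hc.ne' hε0.ne', abs_of_neg hneg]
    field_simp
    ring
  refine tendsto_of_tendsto_of_tendsto_of_le_of_le' (hlim a) (hlim b) ?_ ?_
  · filter_upwards [hlow, Ioo_mem_nhdsGT one_pos] with ε hF hε
    rw [← hlog ha hε]
    gcongr
    exact Real.rpow_pos_of_pos (div_pos ha hε.1) p
  · filter_upwards [hlow, hup, Ioo_mem_nhdsGT one_pos] with ε hF hF' hε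
    rw [← hlog hb hε]
    gcongr
    exact (Real.rpow_pos_of_pos (div_pos ha hε.1) p).trans_le hF

theorem szlenkPowerType_of_dual_asymptoticLp_general
    (E : Type*) [NormedAddCommGroup E] [NormedSpace ℝ E]
    (e : ℕ → E) (e' : ℕ → StrongDual ℝ E)
    (hb : IsBasis1Unconditional e e') (hnorm : ∀ n, ‖e n‖ = 1) (hshr : ShrinkingBasis e)
    (p : ℝ) (hp : 1 ≤ p)
    (hasym : ∃ C ≥ 1, IsAsymptoticLp (ENNReal.ofReal p) C
      (fun n (f : StrongDual ℝ E) => f (e n))) :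
    SzlenkLeOmega E ∧ HasSzlenkPowerType E p := by
  obtain ⟨C, hC, hasy⟩ := hasym
  have hp0 : 0 < p := by linarith
  have hC0 : 0 < C := by linarith
  refine ⟨fun ε hε => ⟨_, iterate_szlenkDeriv_dualUnitBall_eq_empty hb hnorm hshr hp0 hC0 hasy hε⟩,
    tendsto_log_div_abs_log_of_rpow_le_of_le_rpow (a := (2 * C)⁻¹) (b := 16 * C) (by positivity)
      (by positivity) ?_ ?_⟩
  · filter_upwards [self_mem_nhdsWithin] with ε hε
    exact (rpow_lt_szlenkIdx hb hnorm hshr hp0 hC0 hasy hε).le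
  · filter_upwards [Ioc_mem_nhdsGT one_pos] with ε hε
    exact szlenkIdx_le_rpow hb hnorm hshr hp hC hasy hε.1 hε.2

/-- If `E` has a normalized, shrinking, 1-unconditional basis whose dual basis
makes `E*` asymptotic `ℓ_p` for some `p ∈ [1,∞)`, then `Sz(E,ε)` is finite for every `ε > 0`
and the Szlenk power type of `E` equals `p`. -/
theorem szlenkPowerType_of_dual_asymptoticLp
    (E : Type*) [NormedAddCommGroup E] [NormedSpace ℝ E] [CompleteSpace E]
    (e : ℕ → E) (e' : ℕ → StrongDual ℝ E)
    (hb : IsBasis1Unconditional e e') (hnorm : ∀ n, ‖e n‖ = 1) (hshr : ShrinkingBasis e)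
    (p : ℝ) (hp : 1 ≤ p)
    (hasym : ∃ C ≥ 1, IsAsymptoticLp (ENNReal.ofReal p) C
      (fun n (f : StrongDual ℝ E) => f (e n))) :
    SzlenkLeOmega E ∧ HasSzlenkPowerType E p :=
  szlenkPowerType_of_dual_asymptoticLp_general E e e' hb hnorm hshr p hp hasym
end

section
/- Suppose X_1,…,X_N are Banach spaces each having summable Szlenk index with the same constant M. Then the Banach space Y = (⊕_{j=1}^N X_j)_{c0} (the finite c0-sum, i.e., the direct sum with the max norm) has summable Szlenk index with constant 4M. -/
open Filter Topology Set
open scoped ENNReal NNReal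

/-!
The dual of the c₀-sum is the ℓ¹-sum of the duals, so the diameter of a product of sets in
`∏ Xᵢ*` is at most the sum of the diameters of its factors, while products of
weak*-neighbourhoods of the coordinates are weak*-neighbourhoods in the product. Hence a point of
`ι_ε` of a product set has its coordinates in `ι_{δᵢ}` of the factors with `∑ δᵢ ≈ ε`. Cover the
dual ball by finitely many products of balls of radii `rᵢ` with `∑ rᵢ ≈ 1`; passing to finite
unions halves `ε`, so after `n` derivations the coordinates have been derived by lists of total
size `≈ (ε₁ + ⋯ + εₙ) / 2`, while by homogeneity the `i`-th one has size at most `rᵢ M`. This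
gives `∑ εₖ ≤ 2M`.
-/

open Metric Bornology
open scoped Pointwise

section DualSpace

variable {Z : Type*} [NormedAddCommGroup Z] [NormedSpace ℝ Z]

def IsWeakStarClosed (K : Set (StrongDual ℝ Z)) : Prop :=
  IsClosed (WeakDual.toStrongDual ⁻¹' K)

theorem szlenkDeriv_subset (ε : ℝ) (K : Set (StrongDual ℝ Z)) : szlenkDeriv ε K ⊆ K :=
  fun _ hf => hf.1

theorem szlenkDerivList_subset (l : List ℝ) (K : Set (StrongDual ℝ Z)) :
    szlenkDerivList l K ⊆ K := by
  induction l with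
  | nil => exact subset_rfl
  | cons ε l ih => exact (szlenkDeriv_subset ε _).trans ih

theorem szlenkDerivList_append (l₁ l₂ : List ℝ) (K : Set (StrongDual ℝ Z)) :
    szlenkDerivList (l₁ ++ l₂) K = szlenkDerivList l₁ (szlenkDerivList l₂ K) :=
  List.foldr_append

theorem szlenkDeriv_mono {K L : Set (StrongDual ℝ Z)} (hKL : K ⊆ L) (hL : IsBounded L)
    (ε : ℝ) : szlenkDeriv ε K ⊆ szlenkDeriv ε L := fun _ ⟨hfK, hf⟩ =>
  ⟨hKL hfK, fun U hU hfU => (hf U hU hfU).trans_le <|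
    diam_mono (fun _ hg => ⟨hKL hg.1, hg.2⟩) (hL.subset fun _ hg => hg.1)⟩

theorem szlenkDerivList_mono {K L : Set (StrongDual ℝ Z)} (hKL : K ⊆ L) (hL : IsBounded L)
    (l : List ℝ) : szlenkDerivList l K ⊆ szlenkDerivList l L := by
  induction l with
  | nil => exact hKL
  | cons ε l ih => exact szlenkDeriv_mono ih (hL.subset (szlenkDerivList_subset l L)) ε

theorem IsWeakStarClosed.szlenkDeriv {K : Set (StrongDual ℝ Z)} (hK : IsWeakStarClosed K)
    (ε : ℝ) : IsWeakStarClosed (szlenkDeriv ε K) := by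
  refine isClosed_of_closure_subset fun w hw => ⟨?_, fun U hU hwU => ?_⟩
  · exact hK.closure_subset (closure_mono (Set.preimage_mono (szlenkDeriv_subset ε K)) hw)
  · obtain ⟨w', hw'U, hw'⟩ := mem_closure_iff.1 hw U hU hwU
    exact hw'.2 U hU hw'U

theorem IsWeakStarClosed.szlenkDerivList {K : Set (StrongDual ℝ Z)}
    (hK : IsWeakStarClosed K) (l : List ℝ) : IsWeakStarClosed (szlenkDerivList l K) := by
  induction l with
  | nil => exact hK
  | cons ε l ih => exact ih.szlenkDeriv ε

theorem exists_diam_le_of_notMem_szlenkDeriv {K : Set (StrongDual ℝ Z)} {f : StrongDual ℝ Z}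
    {δ : ℝ} (hfK : f ∈ K) (hf : f ∉ szlenkDeriv δ K) :
    ∃ U : Set (WeakDual ℝ Z), IsOpen U ∧ StrongDual.toWeakDual f ∈ U ∧
      diam {g | g ∈ K ∧ StrongDual.toWeakDual g ∈ U} ≤ δ := by
  simpa [szlenkDeriv, hfK] using hf

theorem szlenkDeriv_eq_empty_of_subset_closedBall {K : Set (StrongDual ℝ Z)} {R δ : ℝ}
    (hK : K ⊆ closedBall 0 R) (hδ : 2 * R ≤ δ) : szlenkDeriv δ K = ∅ := by
  refine Set.eq_empty_of_forall_notMem fun f hf => ?_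
  have hR : 0 ≤ R := nonempty_closedBall.1 ⟨_, hK hf.1⟩
  have hdiam : diam {g | g ∈ K ∧ StrongDual.toWeakDual g ∈ Set.univ} ≤ 2 * R :=
    (diam_mono (fun g hg => hK hg.1) isBounded_closedBall).trans (diam_closedBall hR)
  linarith [hf.2 Set.univ isOpen_univ (Set.mem_univ _)]

theorem szlenkDeriv_biUnion_subset {α : Type*} {s : Set α} (hs : s.Finite)
    {A : α → Set (StrongDual ℝ Z)} (hcl : ∀ i ∈ s, IsWeakStarClosed (A i))
    (hbdd : ∀ i ∈ s, IsBounded (A i)) {ε : ℝ} (hε : 0 ≤ ε) :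
    szlenkDeriv ε (⋃ i ∈ s, A i) ⊆ ⋃ i ∈ s, szlenkDeriv (ε / 2) (A i) := by
  intro f ⟨_, hf⟩
  by_contra hnot
  simp only [Set.mem_iUnion, not_exists] at hnot
  have hU : ∀ i ∈ s, ∃ U : Set (WeakDual ℝ Z), IsOpen U ∧ StrongDual.toWeakDual f ∈ U ∧
      ∀ g ∈ A i, StrongDual.toWeakDual g ∈ U → dist g f ≤ ε / 2 := by
    intro i hi
    by_cases hfA : f ∈ A i
    · obtain ⟨U, hUo, hfU, hdiam⟩ := exists_diam_le_of_notMem_szlenkDeriv hfA (hnot i hi)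
      exact ⟨U, hUo, hfU, fun g hg hgU => (dist_le_diam_of_mem
        (s := {x | x ∈ A i ∧ StrongDual.toWeakDual x ∈ U})
        ((hbdd i hi).subset fun _ h => h.1) ⟨hg, hgU⟩ ⟨hfA, hfU⟩).trans hdiam⟩
    · exact ⟨(WeakDual.toStrongDual ⁻¹' A i)ᶜ, (hcl i hi).isOpen_compl, hfA,
        fun g hg hgU => absurd hg hgU⟩
  choose! U hUo hfU hUdist using hU
  refine (hf (⋂ i ∈ s, U i) (hs.isOpen_biInter hUo) (Set.mem_iInter₂.2 hfU)).not_ge <|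
    diam_le_of_forall_dist_le hε fun g ⟨hg, hgU⟩ h ⟨hh, hhU⟩ => ?_
  simp only [Set.mem_iUnion, Set.mem_iInter] at hg hh hgU hhU
  obtain ⟨i, hi, hgi⟩ := hg
  obtain ⟨k, hk, hhk⟩ := hh
  calc dist g h ≤ dist g f + dist h f := dist_triangle_right g h f
    _ ≤ ε / 2 + ε / 2 := add_le_add (hUdist i hi g hgi (hgU i hi)) (hUdist k hk h hhk (hhU k hk))
    _ = ε := add_halves ε

theorem szlenkDeriv_smul {r : ℝ} (hr : 0 < r) (ε : ℝ) (K : Set (StrongDual ℝ Z)) :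
    szlenkDeriv ε (r • K) = r • szlenkDeriv (ε / r) K := by
  have htrace : ∀ U : Set (WeakDual ℝ Z),
      {g | g ∈ r • K ∧ StrongDual.toWeakDual g ∈ U} =
        r • {g | g ∈ K ∧ StrongDual.toWeakDual g ∈ r⁻¹ • U} := by
    intro U
    ext g
    simp [Set.mem_smul_set_iff_inv_smul_mem₀ hr.ne', map_smul,
      Set.smul_mem_smul_set_iff₀ (inv_ne_zero hr.ne')]
  have hdiam : ∀ S : Set (StrongDual ℝ Z), diam (r • S) = r * diam S := fun S =>
    (diam_smul₀ r S).trans (by rw [Real.norm_of_nonneg hr.le])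
  ext f
  constructor
  · rintro ⟨⟨g, hg, rfl⟩, hfd⟩
    refine ⟨g, ⟨hg, fun V hV hgV => ?_⟩, rfl⟩
    have := hfd (r • V) (hV.smul₀ hr.ne') (by rw [map_smul]; exact Set.smul_mem_smul_set hgV)
    rw [htrace, inv_smul_smul₀ hr.ne', hdiam] at this
    rwa [div_lt_iff₀' hr]
  · rintro ⟨g, ⟨hg, hgd⟩, rfl⟩
    refine ⟨Set.smul_mem_smul_set hg, fun U hU hgU => ?_⟩
    have := hgd (r⁻¹ • U) (hU.smul₀ (inv_ne_zero hr.ne')) <| by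
      rwa [Set.mem_smul_set_iff_inv_smul_mem₀ (inv_ne_zero hr.ne'), inv_inv, ← map_smul]
    rwa [htrace, hdiam, ← div_lt_iff₀' hr]

theorem szlenkDerivList_smul {r : ℝ} (hr : 0 < r) (l : List ℝ) (K : Set (StrongDual ℝ Z)) :
    szlenkDerivList l (r • K) = r • szlenkDerivList (l.map (· / r)) K := by
  induction l with
  | nil => rfl
  | cons ε l ih => exact (congrArg (szlenkDeriv ε) ih).trans (szlenkDeriv_smul hr ε _)

theorem HasSummableSzlenkWith.sum_le_of_nonempty {M : ℝ} (h : HasSummableSzlenkWith Z M)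
    {r : ℝ} (hr : 0 < r) {l : List ℝ} (hl : ∀ ε ∈ l, 0 < ε)
    (hne : (szlenkDerivList l (closedBall (0 : StrongDual ℝ Z) r)).Nonempty) :
    l.sum ≤ r * M := by
  rw [← smul_unitClosedBall_of_nonneg hr.le, szlenkDerivList_smul hr, Set.smul_set_nonempty]
    at hne
  have := h _ (by simpa using fun ε hε => div_pos (hl ε hε) hr) hne
  have hsum : (l.map (· / r)).sum = l.sum / r := by
    simp [div_eq_mul_inv, List.sum_map_mul_right]
  rwa [hsum, div_le_iff₀' hr] at this

theorem HasSummableSzlenkWith.mono {M M' : ℝ} (h : HasSummableSzlenkWith Z M) (hM : M ≤ M') :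
    HasSummableSzlenkWith Z M' :=
  fun l hl hne => (h l hl hne).trans hM

theorem exists_norm_le_one_lt_apply (φ : StrongDual ℝ Z) {c : ℝ} (hc : c < ‖φ‖) :
    ∃ y : Z, ‖y‖ ≤ 1 ∧ c < φ y := by
  obtain ⟨x, hx, hcx⟩ := φ.exists_lt_apply_of_lt_opNorm hc
  rcases lt_abs.1 hcx with hpos | hneg
  · exact ⟨x, hx.le, hpos⟩
  · exact ⟨-x, (norm_neg x).trans_le hx.le, by rwa [map_neg]⟩

end DualSpace

section Pi

variable {ι : Type*} [DecidableEq ι] {X : ι → Type*}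
  [∀ i, NormedAddCommGroup (X i)] [∀ i, NormedSpace ℝ (X i)]

def dualCoord (i : ι) (f : StrongDual ℝ (∀ i, X i)) : StrongDual ℝ (X i) :=
  f.comp (ContinuousLinearMap.single ℝ X i)

theorem dualCoord_sub (i : ι) (f g : StrongDual ℝ (∀ i, X i)) :
    dualCoord i (f - g) = dualCoord i f - dualCoord i g :=
  ContinuousLinearMap.sub_comp _ _ _

theorem continuous_dualCoord_weakDual (i : ι) :
    Continuous fun w : WeakDual ℝ (∀ i, X i) =>
      StrongDual.toWeakDual (dualCoord i (WeakDual.toStrongDual w)) :=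
  WeakDual.continuous_of_continuous_eval fun x => WeakDual.eval_continuous (Pi.single i x)

def dualPi (C : ∀ i, Set (StrongDual ℝ (X i))) : Set (StrongDual ℝ (∀ i, X i)) :=
  {f | ∀ i, dualCoord i f ∈ C i}

variable [Fintype ι]

theorem isWeakStarClosed_dualPi {C : ∀ i, Set (StrongDual ℝ (X i))}
    (hC : ∀ i, IsWeakStarClosed (C i)) : IsWeakStarClosed (dualPi C) := by
  have : WeakDual.toStrongDual ⁻¹' dualPi C = ⋂ i, (fun w : WeakDual ℝ (∀ i, X i) =>
      StrongDual.toWeakDual (dualCoord i (WeakDual.toStrongDual w))) ⁻¹'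
        (WeakDual.toStrongDual ⁻¹' C i) :=
    Set.ext fun _ => by simp [dualPi]
  rw [IsWeakStarClosed, this]
  exact isClosed_iInter fun i => (hC i).preimage (continuous_dualCoord_weakDual i)

theorem apply_eq_sum_dualCoord (f : StrongDual ℝ (∀ i, X i)) (x : ∀ i, X i) :
    f x = ∑ i, dualCoord i f (x i) :=
  (ContinuousLinearMap.sum_comp_single ℝ X f x).symm

theorem norm_le_sum_norm_dualCoord (f : StrongDual ℝ (∀ i, X i)) :
    ‖f‖ ≤ ∑ i, ‖dualCoord i f‖ :=
  f.opNorm_le_bound (by positivity) fun x => by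
    rw [apply_eq_sum_dualCoord, Finset.sum_mul]
    refine (norm_sum_le _ _).trans (Finset.sum_le_sum fun i _ => ?_)
    exact ((dualCoord i f).le_opNorm _).trans (by gcongr; exact norm_le_pi_norm x i)

theorem sum_norm_dualCoord_le (f : StrongDual ℝ (∀ i, X i)) :
    ∑ i, ‖dualCoord i f‖ ≤ ‖f‖ := by
  refine le_of_forall_pos_le_add fun ε hε => ?_
  set δ := ε / (Fintype.card ι + 1)
  have hδ : Fintype.card ι * δ ≤ ε := by
    rw [mul_div_assoc', div_le_iff₀ (by positivity)]
    nlinarith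
  choose y hy1 hy2 using fun i =>
    exists_norm_le_one_lt_apply (dualCoord i f) (sub_lt_self _ (by positivity : 0 < δ))
  have hfy : f y ≤ ‖f‖ := (Real.le_norm_self _).trans <| (f.le_opNorm y).trans <|
    mul_le_of_le_one_right (norm_nonneg f) ((pi_norm_le_iff_of_nonneg zero_le_one).2 hy1)
  calc ∑ i, ‖dualCoord i f‖ ≤ ∑ i, (dualCoord i f (y i) + δ) :=
        Finset.sum_le_sum fun i _ => by linarith [hy2 i]
    _ = f y + Fintype.card ι * δ := by
        rw [Finset.sum_add_distrib, ← apply_eq_sum_dualCoord]; simp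
    _ ≤ ‖f‖ + ε := add_le_add hfy hδ

theorem isBounded_dualPi {C : ∀ i, Set (StrongDual ℝ (X i))} (hC : ∀ i, IsBounded (C i)) :
    IsBounded (dualPi C) := by
  choose R hR using fun i => (hC i).subset_closedBall 0
  refine (isBounded_closedBall (x := 0) (r := ∑ i, R i)).subset fun f hf => ?_
  exact mem_closedBall_zero_iff.2 <| (norm_le_sum_norm_dualCoord f).trans <|
    Finset.sum_le_sum fun i _ => mem_closedBall_zero_iff.1 (hR i (hf i))

theorem diam_dualPi_le {C : ∀ i, Set (StrongDual ℝ (X i))} (hC : ∀ i, IsBounded (C i)) :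
    diam (dualPi C) ≤ ∑ i, diam (C i) := by
  refine diam_le_of_forall_dist_le (Finset.sum_nonneg fun i _ => diam_nonneg)
    fun f hf g hg => ?_
  rw [dist_eq_norm]
  refine (norm_le_sum_norm_dualCoord _).trans (Finset.sum_le_sum fun i _ => ?_)
  rw [dualCoord_sub, ← dist_eq_norm]
  exact dist_le_diam_of_mem (hC i) (hf i) (hg i)

theorem lt_sum_of_mem_szlenkDeriv_dualPi {C : ∀ i, Set (StrongDual ℝ (X i))}
    (hC : ∀ i, IsBounded (C i)) {r : ι → ℝ} {ε : ℝ} {f : StrongDual ℝ (∀ i, X i)}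
    (hr : ∀ i, dualCoord i f ∉ szlenkDeriv (r i) (C i)) (hf : f ∈ szlenkDeriv ε (dualPi C)) :
    ε < ∑ i, r i := by
  choose U hUo hfU hdiam using fun i => exists_diam_le_of_notMem_szlenkDeriv (hf.1 i) (hr i)
  set V := ⋂ i, (fun w : WeakDual ℝ (∀ i, X i) =>
    StrongDual.toWeakDual (dualCoord i (WeakDual.toStrongDual w))) ⁻¹' U i
  have htrace : {g | g ∈ dualPi C ∧ StrongDual.toWeakDual g ∈ V} =
      dualPi fun i => {x | x ∈ C i ∧ StrongDual.toWeakDual x ∈ U i} := by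
    ext g
    simp [V, dualPi, forall_and]
  calc ε < diam {g | g ∈ dualPi C ∧ StrongDual.toWeakDual g ∈ V} :=
        hf.2 V (isOpen_iInter_of_finite fun i =>
          (hUo i).preimage (continuous_dualCoord_weakDual i)) (Set.mem_iInter.2 hfU)
    _ ≤ ∑ i, diam {x | x ∈ C i ∧ StrongDual.toWeakDual x ∈ U i} := by
        rw [htrace]
        exact diam_dualPi_le fun i => (hC i).subset fun x hx => hx.1
    _ ≤ ∑ i, r i := Finset.sum_le_sum fun i _ => hdiam i

/-- The derivation `ι_{kγ}` as a list; `k = 0` gives `[]` rather than `[0]`, because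
`szlenkDeriv 0` still removes isolated points. -/
def gridList (γ : ℝ) : ℕ → List ℝ
  | 0 => []
  | k + 1 => [(k + 1) * γ]

theorem sum_gridList (γ : ℝ) (k : ℕ) : (gridList γ k).sum = k * γ := by
  cases k <;> simp [gridList]

theorem pos_of_mem_gridList {γ : ℝ} (hγ : 0 < γ) {k : ℕ} {δ : ℝ} (h : δ ∈ gridList γ k) :
    0 < δ := by
  cases k with
  | zero => simp [gridList] at h
  | succ k => rw [List.mem_singleton.1 h]; positivity

/-- The coordinate derivation amounts are taken on a grid of mesh `γ`, which keeps the number of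
possible outcomes finite, as `szlenkDeriv_biUnion_subset` requires. -/
theorem exists_grid_of_mem_szlenkDeriv_dualPi {C : ∀ i, Set (StrongDual ℝ (X i))} {R γ ε : ℝ}
    (hC : ∀ i, C i ⊆ closedBall 0 R) (hγ : 0 < γ) {f : StrongDual ℝ (∀ i, X i)}
    (hf : f ∈ szlenkDeriv ε (dualPi C)) :
    ∃ w : ι → ℕ, (∀ i, w i ≤ ⌈2 * R / γ⌉₊) ∧ ε < ∑ i, (w i + 1) * γ ∧
      f ∈ dualPi fun i => szlenkDerivList (gridList γ (w i)) (C i) := by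
  classical
  have hK : ∀ i, dualCoord i f ∉ szlenkDeriv ((⌈2 * R / γ⌉₊ + 1) * γ) (C i) := fun i => by
    rw [szlenkDeriv_eq_empty_of_subset_closedBall (hC i)]
    · exact Set.notMem_empty _
    · nlinarith [(div_le_iff₀ hγ).1 (Nat.le_ceil (2 * R / γ))]
  have hex : ∀ i, ∃ k : ℕ, dualCoord i f ∉ szlenkDeriv ((k + 1) * γ) (C i) := fun i => ⟨_, hK i⟩
  refine ⟨fun i => Nat.find (hex i), fun i => Nat.find_min' _ (hK i),
    lt_sum_of_mem_szlenkDeriv_dualPi (fun i => isBounded_closedBall.subset (hC i))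
      (fun i => Nat.find_spec (hex i)) hf, fun i => ?_⟩
  show dualCoord i f ∈ szlenkDerivList (gridList γ (Nat.find (hex i))) (C i)
  cases hk : Nat.find (hex i) with
  | zero => exact hf.1 i
  | succ k =>
    have := Nat.find_min (hex i) (hk.symm ▸ Nat.lt_succ_self k : k < Nat.find (hex i))
    simpa [gridList, szlenkDerivList] using this

/-- Each derivation halves `ε` on passing to a finite union of products
(`szlenkDeriv_biUnion_subset`) and loses `card ι * γ` to the grid. -/
theorem exists_dualCoord_mem_szlenkDerivList {R γ : ℝ} (hγ : 0 < γ) (l : List ℝ)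
    (hl : ∀ ε ∈ l, 0 < ε) {F : Set (∀ i, Set (StrongDual ℝ (X i)))} (hF : F.Finite)
    (hFcl : ∀ C ∈ F, ∀ i, IsWeakStarClosed (C i)) (hFR : ∀ C ∈ F, ∀ i, C i ⊆ closedBall 0 R)
    {f : StrongDual ℝ (∀ i, X i)} (hf : f ∈ szlenkDerivList l (⋃ C ∈ F, dualPi C)) :
    ∃ C ∈ F, ∃ m : ι → List ℝ, (∀ i, ∀ δ ∈ m i, 0 < δ) ∧
      l.sum ≤ 2 * (∑ i, (m i).sum + l.length * Fintype.card ι * γ) ∧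
      ∀ i, dualCoord i f ∈ szlenkDerivList (m i) (C i) := by
  induction l using List.reverseRecOn generalizing F with
  | nil =>
    obtain ⟨C, hC, hfC⟩ := Set.mem_iUnion₂.1 hf
    exact ⟨C, hC, fun _ => [], by simp, by simp, hfC⟩
  | append_singleton l ε ih =>
    set W := {w : ι → ℕ | (∀ i, w i ≤ ⌈2 * R / γ⌉₊) ∧ ε / 2 < ∑ i, (w i + 1) * γ}
    set shrink : (∀ i, Set (StrongDual ℝ (X i))) → (ι → ℕ) → ∀ i, Set (StrongDual ℝ (X i)) :=
      fun C w i => szlenkDerivList (gridList γ (w i)) (C i)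
    set F' := Set.image2 shrink F W
    have hF' : F'.Finite :=
      hF.image2 _ ((Set.finite_Iic fun _ => ⌈2 * R / γ⌉₊).subset fun w hw => hw.1)
    have hF'cl : ∀ C ∈ F', ∀ i, IsWeakStarClosed (C i) := by
      rintro _ ⟨C, hC, w, -, rfl⟩ i
      exact (hFcl C hC i).szlenkDerivList _
    have hF'R : ∀ C ∈ F', ∀ i, C i ⊆ closedBall 0 R := by
      rintro _ ⟨C, hC, w, -, rfl⟩ i
      exact (szlenkDerivList_subset _ _).trans (hFR C hC i)
    have hstep : szlenkDeriv ε (⋃ C ∈ F, dualPi C) ⊆ ⋃ C ∈ F', dualPi C := by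
      intro g hg
      obtain ⟨C, hC, hgC⟩ := Set.mem_iUnion₂.1 <| szlenkDeriv_biUnion_subset hF
        (fun C hC => isWeakStarClosed_dualPi (hFcl C hC))
        (fun C hC => isBounded_dualPi fun i => isBounded_closedBall.subset (hFR C hC i))
        (hl ε (by simp)).le hg
      obtain ⟨w, hwK, hwε, hgw⟩ := exists_grid_of_mem_szlenkDeriv_dualPi (hFR C hC) hγ hgC
      exact Set.mem_iUnion₂.2 ⟨_, Set.mem_image2_of_mem hC ⟨hwK, hwε⟩, hgw⟩
    have hbdd : IsBounded (⋃ C ∈ F', dualPi C) := (isBounded_biUnion hF').2 fun C hC =>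
      isBounded_dualPi fun i => isBounded_closedBall.subset (hF'R C hC i)
    rw [szlenkDerivList_append] at hf
    obtain ⟨_, ⟨C, hC, w, hw, rfl⟩, m, hm, hsum, hfm⟩ :=
      ih (fun δ hδ => hl δ (by simp [hδ])) hF' hF'cl hF'R (szlenkDerivList_mono hstep hbdd l hf)
    refine ⟨C, hC, fun i => m i ++ gridList γ (w i), fun i δ hδ => ?_, ?_, fun i => ?_⟩
    · rcases List.mem_append.1 hδ with h | h
      · exact hm i δ h
      · exact pos_of_mem_gridList hγ h
    · have hw' : ε / 2 < ∑ i, (w i : ℝ) * γ + Fintype.card ι * γ := by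
        simpa [add_mul, Finset.sum_add_distrib] using hw.2
      simp only [List.sum_append, List.sum_cons, List.sum_nil, List.length_append,
        List.length_singleton, sum_gridList, Finset.sum_add_distrib]
      push_cast
      linarith
    · rw [szlenkDerivList_append]
      exact hfm i

theorem dualUnitBall_pi_subset {η : ℝ} (hη : 0 < η) :
    dualUnitBall (∀ i, X i) ⊆ ⋃ a ∈ {a : ι → ℕ | ∑ i, a i * η ≤ 1},
      dualPi fun i => closedBall 0 ((a i + 1) * η) := by
  intro f hf
  have hf1 : ∑ i, ‖dualCoord i f‖ ≤ 1 :=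
    (sum_norm_dualCoord_le f).trans (mem_closedBall_zero_iff.1 hf)
  refine Set.mem_iUnion₂.2 ⟨fun i => ⌊‖dualCoord i f‖ / η⌋₊, ?_, fun i => ?_⟩
  · exact (Finset.sum_le_sum fun i _ =>
      (le_div_iff₀ hη).1 (Nat.floor_le (by positivity))).trans hf1
  · exact mem_closedBall_zero_iff.2 ((div_le_iff₀ hη).1 (Nat.lt_floor_add_one _).le)

theorem sum_le_of_nonempty_szlenkDerivList_dualUnitBall_pi {M : ℝ} (hM : 0 ≤ M)
    (h : ∀ i, HasSummableSzlenkWith (X i) M) {l : List ℝ} (hl : ∀ ε ∈ l, 0 < ε)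
    (hne : (szlenkDerivList l (dualUnitBall (∀ i, X i))).Nonempty) {t : ℝ} (ht : 0 < t) :
    l.sum ≤ 2 * ((1 + Fintype.card ι * t) * M + l.length * Fintype.card ι * t) := by
  obtain ⟨f, hf⟩ := hne
  set A := {a : ι → ℕ | ∑ i, a i * t ≤ 1}
  set balls : (ι → ℕ) → ∀ i, Set (StrongDual ℝ (X i)) :=
    fun a i => closedBall 0 ((a i + 1) * t)
  have hat : ∀ a ∈ A, ∀ i, a i * t ≤ 1 := fun a ha i =>
    (Finset.single_le_sum (f := fun i => (a i : ℝ) * t) (fun i _ => by positivity)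
      (Finset.mem_univ i)).trans ha
  have hA : A.Finite := (Set.finite_Iic fun _ => ⌊1 / t⌋₊).subset fun a ha i =>
    Nat.le_floor ((le_div_iff₀ ht).2 (hat a ha i))
  have hcover : dualUnitBall (∀ i, X i) ⊆ ⋃ C ∈ balls '' A, dualPi C := by
    rw [Set.biUnion_image]
    exact dualUnitBall_pi_subset ht
  have hbdd : IsBounded (⋃ C ∈ balls '' A, dualPi C) := (isBounded_biUnion (hA.image _)).2
    (by rintro _ ⟨a, -, rfl⟩; exact isBounded_dualPi fun i => isBounded_closedBall)
  obtain ⟨_, ⟨a, ha, rfl⟩, m, hm, hsum, hfm⟩ := exists_dualCoord_mem_szlenkDerivList (R := 1 + t)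
    ht l hl (hA.image _) (by rintro _ ⟨a, -, rfl⟩ i; exact WeakDual.isClosed_closedBall _ _)
    (by rintro _ ⟨a, ha, rfl⟩ i; exact closedBall_subset_closedBall (by linarith [hat a ha i]))
    (szlenkDerivList_mono hcover hbdd l hf)
  have hmsum : ∑ i, (m i).sum ≤ (1 + Fintype.card ι * t) * M :=
    calc ∑ i, (m i).sum ≤ ∑ i, (a i + 1) * t * M := Finset.sum_le_sum fun i _ =>
          (h i).sum_le_of_nonempty (by positivity) (hm i) ⟨_, hfm i⟩
      _ = (∑ i, a i * t + Fintype.card ι * t) * M := by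
          simp [add_mul, Finset.sum_add_distrib, Finset.sum_mul, mul_assoc]
      _ ≤ (1 + Fintype.card ι * t) * M := by gcongr; exact ha
  linarith

theorem hasSummableSzlenkWith_pi {M : ℝ} (hM : 0 ≤ M)
    (h : ∀ i, HasSummableSzlenkWith (X i) M) : HasSummableSzlenkWith (∀ i, X i) (2 * M) := by
  intro l hl hne
  have hlim : Tendsto (fun t : ℝ => 2 * ((1 + Fintype.card ι * t) * M +
      l.length * Fintype.card ι * t)) (𝓝[>] 0) (𝓝 (2 * M)) := by
    have hcont : Continuous fun t : ℝ => 2 * ((1 + Fintype.card ι * t) * M +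
        l.length * Fintype.card ι * t) := by fun_prop
    simpa using (hcont.tendsto 0).mono_left nhdsWithin_le_nhds
  exact ge_of_tendsto hlim <| eventually_nhdsWithin_of_forall fun t ht =>
    sum_le_of_nonempty_szlenkDerivList_dualUnitBall_pi hM h hl hne ht

end Pi

theorem finiteC0Sum_hasSummableSzlenkWith_general
    (N : ℕ) (X : Fin N → Type*) [∀ j, NormedAddCommGroup (X j)] [∀ j, NormedSpace ℝ (X j)]
    (M : ℝ) (hM : 0 < M) (h : ∀ j, HasSummableSzlenkWith (X j) M) :
    HasSummableSzlenkWith (∀ j, X j) (4 * M) :=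
  (hasSummableSzlenkWith_pi hM.le h).mono (by linarith)

/-- If `X₁, …, X_N` have summable Szlenk index with the same constant `M`,
then the finite c₀-sum (the product with the sup norm, which is the norm of the `Pi` instance)
has summable Szlenk index with constant `4M`. -/
theorem finiteC0Sum_hasSummableSzlenkWith
    (N : ℕ) (X : Fin N → Type*) [∀ j, NormedAddCommGroup (X j)] [∀ j, NormedSpace ℝ (X j)]
    [∀ j, CompleteSpace (X j)]
    (M : ℝ) (hM : 0 < M) (h : ∀ j, HasSummableSzlenkWith (X j) M) :
    HasSummableSzlenkWith (∀ j, X j) (4 * M) :=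
  finiteC0Sum_hasSummableSzlenkWith_general N X M hM h
end

section
/- Let X be a Banach space with a 1-unconditional basis (e_m) with respect to which X is C-asymptotic ℓ_p, for some 1 ≤ p ≤ ∞ and C ≥ 1. Define the fast growing hierarchy g_0(n) = n + 1 and g_{k+1}(n) = g_k^{(n)}(n) (the n-fold iteration of g_k at n). Then for every k ≥ 0 and every n ≥ 1, any g_k(n) normalized block vectors of (e_m) with supports contained in (n, ∞) are C^{k+1}-equivalent to the unit vector basis of ℓ_p^{g_k(n)}; that is, if v_1,…,v_{g_k(n)} are norm-one vectors with n < supp(v_1) < supp(v_2) < ⋯ < supp(v_{g_k(n)}), then for all scalars a_1,…,a_{g_k(n)}: C^{-(k+1)}(Σ_i |a_i|^p)^{1/p} ≤ ‖Σ_i a_i v_i‖ ≤ C^{k+1}(Σ_i |a_i|^p)^{1/p} (max norm when p = ∞). -/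
open Filter Topology Set
open scoped ENNReal NNReal

/-!
Cut `g_{k+1}(n) = g_k^{(n)}(n)` successive vectors into `n` consecutive blocks, the block
beginning at level `L` (its vectors are supported beyond `L`) having `g_k(L)` members; the
levels grow fast enough for `n` blocks to exhaust all the vectors. By induction on `k` each
block sum is `C^{k+1}`-equivalent to the `ℓ_p`-norm of its coefficients, and there are only `n`
blocks, all supported beyond `n`, so asymptotic `ℓ_p` applies to the block sums and costs one
more factor `C`. The two estimates compose because the `ℓ_p`-norm of a concatenation is the
`ℓ_p`-norm of the `ℓ_p`-norms of the pieces.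
-/

open Finset Function

section PNormOn

variable {ι κ : Type*} {p : ℝ≥0∞}

noncomputable def pNormOn (p : ℝ≥0∞) (s : Finset ι) (a : ι → ℝ) : ℝ :=
  if p = ∞ then ((s.sup fun i => ‖a i‖₊ : ℝ≥0) : ℝ)
  else (∑ i ∈ s, |a i| ^ p.toReal) ^ (1 / p.toReal)

theorem pNormOn_univ [Fintype ι] (a : ι → ℝ) : pNormOn p univ a = pNorm p a := rfl

theorem pNormOn_nonneg (s : Finset ι) (a : ι → ℝ) : 0 ≤ pNormOn p s a := by
  unfold pNormOn
  split_ifs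
  · exact NNReal.coe_nonneg _
  · positivity

theorem pNormOn_le_pNormOn {s : Finset ι} {a b : ι → ℝ} (h : ∀ i ∈ s, |a i| ≤ |b i|) :
    pNormOn p s a ≤ pNormOn p s b := by
  unfold pNormOn
  split_ifs
  · exact NNReal.coe_le_coe.mpr <| Finset.sup_mono_fun fun i hi => by
      simpa only [← NNReal.coe_le_coe, coe_nnnorm, Real.norm_eq_abs] using h i hi
  · refine Real.rpow_le_rpow (by positivity) (Finset.sum_le_sum fun i hi => ?_) (by positivity)
    exact Real.rpow_le_rpow (abs_nonneg _) (h i hi) (by positivity)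

theorem pNormOn_congr_abs {s : Finset ι} {a b : ι → ℝ} (h : ∀ i ∈ s, |a i| = |b i|) :
    pNormOn p s a = pNormOn p s b :=
  (pNormOn_le_pNormOn fun i hi => (h i hi).le).antisymm
    (pNormOn_le_pNormOn fun i hi => (h i hi).ge)

theorem pNormOn_const_mul (hp : p ≠ 0) (s : Finset ι) (c : ℝ) (a : ι → ℝ) :
    pNormOn p s (fun i => c * a i) = |c| * pNormOn p s a := by
  unfold pNormOn
  split_ifs with hpt
  · simp only [nnnorm_mul, ← NNReal.mul_finset_sup, NNReal.coe_mul, coe_nnnorm,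
      Real.norm_eq_abs]
  · have ht : 0 < p.toReal := ENNReal.toReal_pos hp hpt
    simp only [abs_mul, Real.mul_rpow (abs_nonneg _) (abs_nonneg _), ← Finset.mul_sum]
    rw [Real.mul_rpow (by positivity) (by positivity), ← Real.rpow_mul (abs_nonneg c),
      mul_one_div_cancel ht.ne', Real.rpow_one]

theorem pNormOn_map (s : Finset κ) (f : κ ↪ ι) (a : ι → ℝ) :
    pNormOn p (s.map f) a = pNormOn p s (a ∘ f) := by
  unfold pNormOn
  rw [Finset.sup_map, Finset.sum_map]
  rfl

theorem pNormOn_range (n : ℕ) (a : ℕ → ℝ) :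
    pNormOn p (range n) a = pNorm p fun j : Fin n => a j := by
  rw [← Nat.Iio_eq_range, ← Fin.map_valEmbedding_univ, pNormOn_map]
  rfl

theorem pNormOn_biUnion [DecidableEq ι] (hp : p ≠ 0) {s : Finset κ} {t : κ → Finset ι}
    (h : (s : Set κ).PairwiseDisjoint t) (a : ι → ℝ) :
    pNormOn p (s.biUnion t) a = pNormOn p s fun j => pNormOn p (t j) a := by
  unfold pNormOn
  split_ifs with hpt
  · simp only [Finset.sup_biUnion, NNReal.nnnorm_eq]
  · have ht : 0 < p.toReal := ENNReal.toReal_pos hp hpt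
    rw [Finset.sum_biUnion h]
    congr 1
    refine Finset.sum_congr rfl fun j _ => ?_
    rw [abs_of_nonneg (by positivity), ← Real.rpow_mul (by positivity),
      one_div_mul_cancel ht.ne', Real.rpow_one]

end PNormOn

def WithinFactor (D r t : ℝ) : Prop := D⁻¹ * r ≤ t ∧ t ≤ D * r

theorem WithinFactor.of_pNormOn_blocks {κ : Type*} {p : ℝ≥0∞} (hp : p ≠ 0) {s : Finset κ}
    {r t : κ → ℝ} {y C D : ℝ} (hC : 0 ≤ C) (hD : 0 ≤ D) (hr : ∀ j ∈ s, 0 ≤ r j)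
    (ht : ∀ j ∈ s, WithinFactor D (r j) (t j)) (hy : WithinFactor C (pNormOn p s t) y) :
    WithinFactor (C * D) (pNormOn p s r) y := by
  have hlow : ∀ j ∈ s, 0 ≤ D⁻¹ * r j := fun j hj => mul_nonneg (inv_nonneg.2 hD) (hr j hj)
  have ht_nonneg : ∀ j ∈ s, 0 ≤ t j := fun j hj => (hlow j hj).trans (ht j hj).1
  have hlower : D⁻¹ * pNormOn p s r ≤ pNormOn p s t := by
    rw [← abs_of_nonneg (inv_nonneg.2 hD), ← pNormOn_const_mul hp]
    refine pNormOn_le_pNormOn fun j hj => ?_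
    rw [abs_of_nonneg (hlow j hj), abs_of_nonneg (ht_nonneg j hj)]
    exact (ht j hj).1
  have hupper : pNormOn p s t ≤ D * pNormOn p s r := by
    rw [← abs_of_nonneg hD, ← pNormOn_const_mul hp]
    refine pNormOn_le_pNormOn fun j hj => ?_
    rw [abs_of_nonneg (ht_nonneg j hj), abs_of_nonneg (mul_nonneg hD (hr j hj))]
    exact (ht j hj).2
  constructor
  · calc (C * D)⁻¹ * pNormOn p s r = C⁻¹ * (D⁻¹ * pNormOn p s r) := by rw [mul_inv]; ring
      _ ≤ C⁻¹ * pNormOn p s t := by gcongr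
      _ ≤ y := hy.1
  · calc y ≤ C * pNormOn p s t := hy.2
      _ ≤ C * (D * pNormOn p s r) := by gcongr
      _ = C * D * pNormOn p s r := by ring

theorem Finset.biUnion_range_Ico_of_monotone {u : ℕ → ℕ} (hu : Monotone u) (m : ℕ) :
    (range m).biUnion (fun j => Ico (u j) (u (j + 1))) = Ico (u 0) (u m) := by
  induction m with
  | zero => simp
  | succ m ih =>
    rw [range_add_one, biUnion_insert, ih, union_comm,
      Ico_union_Ico_eq_Ico (hu (Nat.zero_le m)) (hu m.le_succ)]

theorem Finset.pairwiseDisjoint_Ico_of_monotone {u : ℕ → ℕ} (hu : Monotone u) (s : Set ℕ) :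
    s.PairwiseDisjoint fun j => Ico (u j) (u (j + 1)) := by
  have key : ∀ i j, i < j → Disjoint (Ico (u i) (u (i + 1))) (Ico (u j) (u (j + 1))) :=
    fun i j hij => disjoint_left.2 fun l hl hl' => by
      have := hu (show i + 1 ≤ j from hij)
      simp only [mem_Ico] at hl hl'
      omega
  intro i _ j _ hij
  rcases hij.lt_or_gt with h | h
  · exact key i j h
  · exact (key j i h).symm

theorem self_le_fastGrowing : ∀ k t, t ≤ fastGrowing k t
  | 0, t => t.le_succ
  | k + 1, t => id_le_iterate_of_id_le (self_le_fastGrowing k) t t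

theorem fastGrowing_monotone : ∀ k, Monotone (fastGrowing k)
  | 0 => fun _ _ h => Nat.succ_le_succ h
  | k + 1 => fun a b hab =>
    calc (fastGrowing k)^[a] a ≤ (fastGrowing k)^[a] b := (fastGrowing_monotone k).iterate a hab
      _ ≤ (fastGrowing k)^[b] b := monotone_iterate_of_id_le (self_le_fastGrowing k) hab b

def blockStart (g : ℕ → ℕ) (M : ℕ) : ℕ → ℕ
  | 0 => 0
  | j + 1 => blockStart g M j + g (M + blockStart g M j)

theorem blockStart_monotone (g : ℕ → ℕ) (M : ℕ) : Monotone (blockStart g M) :=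
  monotone_nat_of_le_succ fun _ => Nat.le_add_right _ _

theorem iterate_le_add_blockStart {g : ℕ → ℕ} (hg : Monotone g) (M : ℕ) :
    ∀ j, g^[j] M ≤ M + blockStart g M j
  | 0 => le_rfl
  | j + 1 => by
    rw [iterate_succ_apply', blockStart]
    have := hg (iterate_le_add_blockStart hg M j)
    omega

theorem iterate_self_le_blockStart {g : ℕ → ℕ} (hg : Monotone g) :
    ∀ M, g^[M] M ≤ blockStart g M M
  | 0 => le_rfl
  | M + 1 => by
    rw [iterate_succ_apply', blockStart]
    have := hg (iterate_le_add_blockStart hg (M + 1) M)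
    omega

section Blocks

variable {X : Type*} [NormedAddCommGroup X] [NormedSpace ℝ X] {e' : ℕ → StrongDual ℝ X}

def coordSupport (e' : ℕ → StrongDual ℝ X) (x : X) : Set ℕ := {μ | e' μ x ≠ 0}

theorem coordSupport_sum_subset {ι : Type*} (s : Finset ι) (y : ι → X) :
    coordSupport e' (∑ i ∈ s, y i) ⊆ ⋃ i ∈ s, coordSupport e' (y i) := by
  intro μ hμ
  have : μ ∈ support fun μ => ∑ i ∈ s, e' μ (y i) := by
    simpa [coordSupport, map_sum] using hμ
  simpa [coordSupport] using Finset.support_sum s _ this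

theorem coordSupport_smul_subset (c : ℝ) (x : X) :
    coordSupport e' (c • x) ⊆ coordSupport e' x := fun μ hμ hx =>
  hμ (by rw [map_smul, hx, smul_zero])

theorem coordSupport_nonempty_of_hasSum {e : ℕ → X} {x : X}
    (hx : HasSum (fun n => e' n x • e n) x) (hx₀ : x ≠ 0) : (coordSupport e' x).Nonempty := by
  refine Set.nonempty_iff_ne_empty.2 fun h => hx₀ (hx.unique ?_)
  have hcoord : ∀ n, e' n x = 0 := fun n => not_not.1 (Set.eq_empty_iff_forall_notMem.1 h n)
  simp [hcoord]

theorem add_le_of_successive {N n : ℕ} (S : Fin N → Set ℕ) (hne : ∀ i, (S i).Nonempty)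
    (hn : ∀ i, ∀ μ ∈ S i, n ≤ μ)
    (hlt : ∀ i j, i < j → ∀ μ μ', μ ∈ S i → μ' ∈ S j → μ < μ')
    (i : Fin N) : ∀ μ ∈ S i, n + i ≤ μ := by
  obtain ⟨i, hi⟩ := i
  induction i with
  | zero => simpa using hn _
  | succ i ih =>
    intro μ hμ
    obtain ⟨μ₀, hμ₀⟩ := hne ⟨i, by omega⟩
    have h₀ : n + i ≤ μ₀ := ih (by omega) μ₀ hμ₀
    have h₁ : μ₀ < μ := hlt ⟨i, by omega⟩ ⟨i + 1, hi⟩ (by simp [Fin.lt_def]) μ₀ μ hμ₀ hμ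
    show n + (i + 1) ≤ μ
    omega

theorem IsAsymptoticLp.withinFactor_Ico {p : ℝ≥0∞} {C : ℝ}
    (hasym : IsAsymptoticLp p C fun m x => e' m x) (y : ℕ → X) (a n : ℕ)
    (hfin : ∀ i ∈ Finset.Ico a (a + n), (coordSupport e' (y i)).Finite)
    (hle : ∀ i ∈ Finset.Ico a (a + n), ∀ μ ∈ coordSupport e' (y i), n ≤ μ + 1)
    (hlt : ∀ i ∈ Finset.Ico a (a + n), ∀ j ∈ Finset.Ico a (a + n), i < j →
      ∀ μ μ', μ ∈ coordSupport e' (y i) → μ' ∈ coordSupport e' (y j) → μ < μ') :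
    WithinFactor C (pNormOn p (Finset.Ico a (a + n)) fun i => ‖y i‖)
      ‖∑ i ∈ Finset.Ico a (a + n), y i‖ := by
  have hmem : ∀ j : Fin n, a + j ∈ Finset.Ico a (a + n) := fun j =>
    Finset.mem_Ico.2 ⟨by omega, by omega⟩
  have hIco : (univ : Finset (Fin n)).map (Fin.valEmbedding.trans (addLeftEmbedding a)) =
      Finset.Ico a (a + n) := by
    rw [← Finset.map_map, Fin.map_valEmbedding_univ, Nat.Iio_eq_range, range_eq_Ico,
      map_add_left_Ico, add_zero]
  rw [← hIco, pNormOn_map, sum_map]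
  exact hasym n (fun j => y (a + j)) (fun j => hfin _ (hmem j))
    (fun j μ hμ => hle _ (hmem j) μ hμ)
    fun j j' hjj' μ μ' hμ hμ' =>
      hlt _ (hmem j) _ (hmem j') (by simpa using hjj') μ μ' hμ hμ'

/-- Zero vectors are allowed, so `add_le` does not follow from `lt`. -/
structure IsBlockSequence (e' : ℕ → StrongDual ℝ X) (c : ℕ) (x : ℕ → X) : Prop where
  finite : ∀ i, (coordSupport e' (x i)).Finite
  add_le : ∀ i, ∀ μ ∈ coordSupport e' (x i), c + i ≤ μ
  lt : ∀ ⦃i j⦄, i < j →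
    ∀ μ μ', μ ∈ coordSupport e' (x i) → μ' ∈ coordSupport e' (x j) → μ < μ'

theorem IsBlockSequence.extend {N c : ℕ} {w : Fin N → X}
    (hfin : ∀ i, (coordSupport e' (w i)).Finite)
    (hle : ∀ i, ∀ μ ∈ coordSupport e' (w i), c + i ≤ μ)
    (hlt : ∀ i j, i < j →
      ∀ μ μ', μ ∈ coordSupport e' (w i) → μ' ∈ coordSupport e' (w j) → μ < μ') :
    IsBlockSequence e' c (Function.extend Fin.val w 0) := by
  have hmem : ∀ i, ∀ μ ∈ coordSupport e' (Function.extend Fin.val w 0 i),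
      ∃ j : Fin N, ↑j = i ∧ μ ∈ coordSupport e' (w j) := by
    intro i μ hμ
    by_cases h : ∃ j : Fin N, ↑j = i
    · obtain ⟨j, rfl⟩ := h
      exact ⟨j, rfl, by rwa [Fin.val_injective.extend_apply] at hμ⟩
    · simp [extend_apply' _ _ _ h, coordSupport] at hμ
  refine ⟨fun i => (Set.finite_iUnion hfin).subset fun μ hμ => ?_, fun i μ hμ => ?_,
    fun i i' hii' μ μ' hμ hμ' => ?_⟩
  · obtain ⟨j, -, hj⟩ := hmem i μ hμ
    exact Set.mem_iUnion.2 ⟨j, hj⟩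
  · obtain ⟨j, rfl, hj⟩ := hmem i μ hμ
    exact hle j μ hj
  · obtain ⟨j, rfl, hj⟩ := hmem i μ hμ
    obtain ⟨j', rfl, hj'⟩ := hmem i' μ' hμ'
    exact hlt j j' hii' μ μ' hj hj'

variable {p : ℝ≥0∞} {C : ℝ} {c : ℕ} {x : ℕ → X}

theorem IsBlockSequence.withinFactor_of_partition (hx : IsBlockSequence e' c x)
    (hasym : IsAsymptoticLp p C fun m x => e' m x) (hp : p ≠ 0) (hC : 0 ≤ C) {D : ℝ}
    (hD : 0 ≤ D) {u : ℕ → ℕ} (hu : Monotone u) {m : ℕ} (hm : m ≤ c + u 0 + 1)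
    (hblocks : ∀ j < m,
      WithinFactor D (pNormOn p (Finset.Ico (u j) (u (j + 1))) fun i => ‖x i‖)
        ‖∑ i ∈ Finset.Ico (u j) (u (j + 1)), x i‖) :
    WithinFactor (C * D) (pNormOn p (Finset.Ico (u 0) (u m)) fun i => ‖x i‖)
      ‖∑ i ∈ Finset.Ico (u 0) (u m), x i‖ := by
  set B := fun j => Finset.Ico (u j) (u (j + 1))
  have hdisj := pairwiseDisjoint_Ico_of_monotone hu (Finset.range m)
  have hmem : ∀ j, ∀ μ ∈ coordSupport e' (∑ i ∈ B j, x i),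
      ∃ i ∈ B j, μ ∈ coordSupport e' (x i) := fun j μ hμ => by
    simpa using coordSupport_sum_subset _ _ hμ
  have hy := hasym.withinFactor_Ico (fun j => ∑ i ∈ B j, x i) 0 m
    (fun j _ => ((B j).finite_toSet.biUnion fun i _ => hx.finite i).subset
      (coordSupport_sum_subset _ _))
    (fun j _ μ hμ => by
      obtain ⟨i, hi, hμi⟩ := hmem j μ hμ
      have := hx.add_le i μ hμi
      have := hu (Nat.zero_le j)
      simp only [B, Finset.mem_Ico] at hi
      omega)
    (fun j _ j' _ hjj' μ μ' hμ hμ' => by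
      obtain ⟨i, hi, hμi⟩ := hmem j μ hμ
      obtain ⟨i', hi', hμi'⟩ := hmem j' μ' hμ'
      have := hu (show j + 1 ≤ j' from hjj')
      simp only [B, Finset.mem_Ico] at hi hi'
      exact hx.lt (by omega) μ μ' hμi hμi')
  rw [zero_add, ← Finset.range_eq_Ico] at hy
  rw [← biUnion_range_Ico_of_monotone hu, sum_biUnion hdisj, pNormOn_biUnion hp hdisj]
  exact hy.of_pNormOn_blocks hp hC hD (fun j _ => pNormOn_nonneg _ _)
    fun j hj => hblocks j (mem_range.1 hj)

theorem IsBlockSequence.withinFactor_of_le_fastGrowing (hx : IsBlockSequence e' c x)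
    (hasym : IsAsymptoticLp p C fun m x => e' m x) (hp : p ≠ 0) (hC : 0 ≤ C) :
    ∀ k a n, n ≤ fastGrowing k (c + a) →
      WithinFactor (C ^ (k + 1)) (pNormOn p (Finset.Ico a (a + n)) fun i => ‖x i‖)
        ‖∑ i ∈ Finset.Ico a (a + n), x i‖
  | 0, a, n, hn => by
    rw [pow_one]
    refine hasym.withinFactor_Ico x a n (fun i _ => hx.finite i) (fun i hi μ hμ => ?_)
      fun i _ j _ hij => hx.lt hij
    have := hx.add_le i μ hμ
    simp only [fastGrowing, Finset.mem_Ico] at hn hi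
    omega
  | k + 1, a, n, hn => by
    set u : ℕ → ℕ := fun j => a + min (blockStart (fastGrowing k) (c + a) j) n with hu_def
    have hu : Monotone u := fun i j hij => by
      have := blockStart_monotone (fastGrowing k) (c + a) hij
      simp only [hu_def]
      omega
    have hu₀ : u 0 = a := by simp [hu_def, blockStart]
    have hend : u (c + a) = a + n := by
      have := iterate_self_le_blockStart (fastGrowing_monotone k) (c + a)
      simp only [hu_def, min_eq_right (hn.trans this)]
    have hlen : ∀ j, u (j + 1) - u j ≤ fastGrowing k (c + u j) := fun j => by
      have := blockStart_monotone (fastGrowing k) (c + a) j.le_succ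
      by_cases h : blockStart (fastGrowing k) (c + a) j ≤ n
      · simp only [hu_def, min_eq_left h, blockStart, ← add_assoc]
        omega
      · simp only [hu_def]
        omega
    have := hx.withinFactor_of_partition hasym hp hC (pow_nonneg hC _) hu (m := c + a)
      (by omega) fun j _ => by
        have := withinFactor_of_le_fastGrowing hx hasym hp hC k (u j) _ (hlen j)
        rwa [Nat.add_sub_cancel' (hu j.le_succ)] at this
    rwa [hu₀, hend, ← pow_succ'] at this

end Blocks

theorem fastGrowing_blocks_equiv_lp_general
    (X : Type*) [NormedAddCommGroup X] [NormedSpace ℝ X]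
    (e : ℕ → X) (e' : ℕ → StrongDual ℝ X) (hb : IsBasis1Unconditional e e')
    (p : ℝ≥0∞) (hp : 1 ≤ p) (C : ℝ) (hC : 1 ≤ C)
    (hasym : IsAsymptoticLp p C (fun m x => e' m x))
    (k n : ℕ)
    (v : Fin (fastGrowing k n) → X)
    (hv_norm : ∀ i, ‖v i‖ = 1)
    (hv_fin : ∀ i, {m | e' m (v i) ≠ 0}.Finite)
    (hv_supp : ∀ i m, e' m (v i) ≠ 0 → n ≤ m)
    (hv_succ : ∀ (i j : Fin (fastGrowing k n)), i < j →
      ∀ m m', e' m (v i) ≠ 0 → e' m' (v j) ≠ 0 → m < m') :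
    ∀ a : Fin (fastGrowing k n) → ℝ,
      (C ^ (k + 1) : ℝ)⁻¹ * pNorm p a ≤ ‖∑ i, a i • v i‖ ∧
        ‖∑ i, a i • v i‖ ≤ C ^ (k + 1) * pNorm p a := by
  intro a
  have hv_ne : ∀ i, (coordSupport e' (v i)).Nonempty := fun i =>
    coordSupport_nonempty_of_hasSum (hb.expansion _) (norm_ne_zero_iff.1 (by simp [hv_norm]))
  have hsmul : ∀ i, coordSupport e' (a i • v i) ⊆ coordSupport e' (v i) := fun i =>
    coordSupport_smul_subset _ _
  have hx : IsBlockSequence e' n (Function.extend Fin.val (fun i => a i • v i) 0) :=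
    .extend (fun i => (hv_fin i).subset (hsmul i))
      (fun i μ hμ => add_le_of_successive _ hv_ne hv_supp hv_succ i μ (hsmul i hμ))
      fun i j hij μ μ' hμ hμ' => hv_succ i j hij μ μ' (hsmul i hμ) (hsmul j hμ')
  have key := hx.withinFactor_of_le_fastGrowing hasym (zero_lt_one.trans_le hp).ne'
    (zero_le_one.trans hC) k 0 (fastGrowing k n) le_rfl
  have hxv : ∀ i : Fin (fastGrowing k n),
      Function.extend Fin.val (fun i => a i • v i) 0 i = a i • v i :=
    fun i => Fin.val_injective.extend_apply _ _ _
  rw [zero_add, ← Finset.range_eq_Ico, pNormOn_range, ← Fin.sum_univ_eq_sum_range] at key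
  simp only [hxv] at key
  rwa [← pNormOn_univ, pNormOn_congr_abs (b := a) fun i _ => by
    rw [norm_smul, hv_norm, mul_one, abs_norm, Real.norm_eq_abs], pNormOn_univ] at key

/-- In a `C`-asymptotic `ℓ_p` space with a 1-unconditional basis, for every
`k ≥ 0` and `n ≥ 1`, any `g_k(n)` normalized block vectors whose (finite) supports lie in
`(n, ∞)` (1-based; i.e. 0-based indices `≥ n`) and are successive, are `C^{k+1}`-equivalent
to the unit vector basis of `ℓ_p^{g_k(n)}`. -/
theorem fastGrowing_blocks_equiv_lp
    (X : Type*) [NormedAddCommGroup X] [NormedSpace ℝ X]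
    (e : ℕ → X) (e' : ℕ → StrongDual ℝ X) (hb : IsBasis1Unconditional e e')
    (p : ℝ≥0∞) (hp : 1 ≤ p) (C : ℝ) (hC : 1 ≤ C)
    (hasym : IsAsymptoticLp p C (fun m x => e' m x))
    (k n : ℕ) (hn : 1 ≤ n)
    (v : Fin (fastGrowing k n) → X)
    (hv_norm : ∀ i, ‖v i‖ = 1)
    (hv_fin : ∀ i, {m | e' m (v i) ≠ 0}.Finite)
    (hv_supp : ∀ i m, e' m (v i) ≠ 0 → n ≤ m)
    (hv_succ : ∀ (i j : Fin (fastGrowing k n)), i < j →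
      ∀ m m', e' m (v i) ≠ 0 → e' m' (v j) ≠ 0 → m < m') :
    ∀ a : Fin (fastGrowing k n) → ℝ,
      (C ^ (k + 1) : ℝ)⁻¹ * pNorm p a ≤ ‖∑ i, a i • v i‖ ∧
        ‖∑ i, a i • v i‖ ≤ C ^ (k + 1) * pNorm p a :=
  fastGrowing_blocks_equiv_lp_general X e e' hb p hp C hC hasym k n v hv_norm hv_fin hv_supp hv_succ
end
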